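/- arXiv:1803.10422 — 13 statements merged into one kernel-verified Lean document; each statement's English description precedes it below -/
import Mathlib

section
/- Let (γ,d) = (n_s,m_s) be the last vertex of the Newton polygon of q, let (n_{s-1},m_{s-1}) be the previous vertex, and set l_1 = (n_s - n_{s-1})/(m_{s-1} - m_s). Suppose δ ≤ T_{s-1}, where T_{s-1} is the y-intercept of the line through (n_{s-1},m_{s-1}) and (n_s,m_s). Then l_1·δ ≤ γ + l_1·d ≤ i + l_1·j for every (i,j) with b_{ij} ≠ 0. -/
/-!
The Newton polygon is an upper set of `ℝ²`, so a functional exposing its edge from `(n', m')` to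
`(γ, d)` has nonpositive coefficients; being constant on that edge forces it to be a negative
multiple of `(i, j) ↦ i + l₁ j`. Hence `(γ, d)` minimises `i + l₁ j` over the whole polygon, in
particular over the exponents of `q`. The first inequality is `δ ≤ T_{s-1}` multiplied by `l₁ > 0`.
-/

open Set Pointwise

theorem IsUpperSet.convexHull {𝕜 E : Type*} [Ring 𝕜] [PartialOrder 𝕜] [IsOrderedRing 𝕜]
    [AddCommGroup E] [PartialOrder E] [IsOrderedAddMonoid E] [Module 𝕜 E] {s : Set E}
    (hs : IsUpperSet s) : IsUpperSet (_root_.convexHull 𝕜 s) := by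
  intro x y hxy hx
  have htranslate : (y - x) +ᵥ s ⊆ s := by
    rintro _ ⟨u, hu, rfl⟩
    exact hs (le_add_of_nonneg_left (sub_nonneg.2 hxy)) hu
  have hy : y ∈ (y - x) +ᵥ _root_.convexHull 𝕜 s := ⟨x, hx, sub_add_cancel y x⟩
  rw [← convexHull_vadd] at hy
  exact convexHull_mono htranslate hy

theorem IsUpperSet.map_nonpos_of_forall_le {E β F : Type*} [AddCommMonoid E] [Preorder E]
    [IsOrderedAddMonoid E] [AddCommMonoid β] [PartialOrder β] [IsOrderedCancelAddMonoid β]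
    [FunLike F E β] [AddHomClass F E β] {s : Set E} (hs : IsUpperSet s) {l : F} {a v : E}
    (ha : a ∈ s) (hmax : ∀ y ∈ s, l y ≤ l a) (hv : 0 ≤ v) : l v ≤ 0 := by
  have := hmax (a + v) (hs (le_add_of_nonneg_right hv) ha)
  rwa [map_add, add_le_iff_nonpos_right] at this

theorem IsUpperSet.not_subset_segment {𝕜 E : Type*} [Semiring 𝕜] [PartialOrder 𝕜]
    [AddCommMonoid E] [PartialOrder E] [IsOrderedAddMonoid E] [Module 𝕜 E] [PosSMulMono 𝕜 E]
    [IsDirectedOrder E] [NoMaxOrder E] {s : Set E} (hs : IsUpperSet s) (hne : s.Nonempty)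
    (x y : E) : ¬ s ⊆ segment 𝕜 x y := by
  obtain ⟨u, hxu, hyu⟩ := exists_ge_ge x y
  exact fun h => hs.not_bddAbove hne ⟨u, h.trans ((convex_Iic u).segment_subset hxu hyu)⟩

theorem map_eq_fst_smul_add_snd_smul {R M F : Type*} [Semiring R] [AddCommMonoid M] [Module R M]
    [FunLike F (R × R) M] [LinearMapClass F R (R × R) M] (f : F) (x : R × R) :
    f x = x.1 • f (1, 0) + x.2 • f (0, 1) := by
  have hx : x = x.1 • ((1 : R), (0 : R)) + x.2 • ((0 : R), (1 : R)) := by ext <;> simp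
  conv_lhs => rw [hx]
  rw [map_add, map_smul, map_smul]

theorem IsUpperSet.isMinOn_of_isExposed_segment {N : Set (ℝ × ℝ)} (hN : IsUpperSet N)
    {A B : ℝ × ℝ} (hAB : A.2 < B.2) (hface : IsExposed ℝ N (segment ℝ B A)) :
    IsMinOn (fun x : ℝ × ℝ => x.1 + (A.1 - B.1) / (B.2 - A.2) * x.2) N A := by
  set c := (A.1 - B.1) / (B.2 - A.2) with hc
  obtain ⟨l, hl⟩ := hface ⟨A, right_mem_segment ℝ B A⟩
  obtain ⟨hAN, hAmax⟩ : A ∈ N ∧ ∀ y ∈ N, l y ≤ l A := by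
    simpa [hl] using right_mem_segment ℝ B A
  obtain ⟨hBN, hBmax⟩ : B ∈ N ∧ ∀ y ∈ N, l y ≤ l B := by
    simpa [hl] using left_mem_segment ℝ B A
  obtain ⟨a, b, hl_apply⟩ : ∃ a b : ℝ, ∀ x : ℝ × ℝ, l x = x.1 * a + x.2 * b :=
    ⟨_, _, map_eq_fst_smul_add_snd_smul l⟩
  have ha : a ≤ 0 := by
    simpa [hl_apply] using hN.map_nonpos_of_forall_le hAN hAmax (v := (1, 0)) ⟨zero_le_one, le_rfl⟩
  have hb : b = a * c := by
    have hedge : l A = l B := le_antisymm (hBmax A hAN) (hAmax B hBN)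
    rw [hl_apply, hl_apply] at hedge
    rw [hc]
    field_simp [(sub_pos.2 hAB).ne']
    linarith
  have ha_neg : a < 0 := by
    -- otherwise `l = 0` and the exposed face would be all of `N`
    refine ha.lt_of_ne fun ha0 => hN.not_subset_segment (𝕜 := ℝ) ⟨A, hAN⟩ B A fun x hx => ?_
    rw [hl]
    exact ⟨hx, fun y _ => by simp [hl_apply, hb, ha0]⟩
  refine isMinOn_iff.2 fun x hx => ?_
  have hle := hAmax x hx
  rw [hl_apply, hl_apply, hb] at hle
  have hscaled : a * (x.1 + c * x.2) ≤ a * (A.1 + c * A.2) := by linarith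
  exact (mul_le_mul_left_of_neg ha_neg).1 hscaled

theorem stmt1_general
    (S : Set (ℕ × ℕ)) (N : Set (ℝ × ℝ))
    (hN : N = convexHull ℝ (⋃ p ∈ S, {x : ℝ × ℝ | (p.1 : ℝ) ≤ x.1 ∧ (p.2 : ℝ) ≤ x.2}))
    (n' m' γ d δ : ℕ)
    (hn : n' < γ) (hm : d < m')
    (l1 : ℝ) (hl1 : l1 = ((γ : ℝ) - n') / ((m' : ℝ) - d))
    (hface : IsExposed ℝ N (segment ℝ (((n' : ℝ), (m' : ℝ))) (((γ : ℝ), (d : ℝ)))))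
    (T : ℝ) (hT : T = ((γ : ℝ) + l1 * d) / l1)
    (hδT : (δ : ℝ) ≤ T) :
    ∀ p ∈ S, l1 * δ ≤ (γ : ℝ) + l1 * d ∧ (γ : ℝ) + l1 * d ≤ (p.1 : ℝ) + l1 * p.2 := by
  have hquadrants : IsUpperSet (⋃ p ∈ S, {x : ℝ × ℝ | (p.1 : ℝ) ≤ x.1 ∧ (p.2 : ℝ) ≤ x.2}) :=
    isUpperSet_iUnion₂ fun p _ => isUpperSet_Ici ((p.1 : ℝ), (p.2 : ℝ))
  have hupper : IsUpperSet N := hN ▸ hquadrants.convexHull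
  have hl1_pos : 0 < l1 :=
    hl1 ▸ div_pos (sub_pos.2 (by exact_mod_cast hn)) (sub_pos.2 (by exact_mod_cast hm))
  have hmin := hupper.isMinOn_of_isExposed_segment (by simpa using hm) hface
  intro p hp
  refine ⟨by rwa [hT, le_div_iff₀ hl1_pos, mul_comm] at hδT, ?_⟩
  have hpN : ((p.1 : ℝ), (p.2 : ℝ)) ∈ N :=
    hN ▸ subset_convexHull ℝ _ (mem_biUnion hp ⟨le_rfl, le_rfl⟩)
  simpa [hl1] using isMinOn_iff.1 hmin _ hpN

/-- Let (γ,d)=(n_s,m_s) be the last vertex of the Newton polygon N(q) of q,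
(n',m') = (n_{s-1},m_{s-1}) the previous vertex, l₁ = (n_s - n_{s-1})/(m_{s-1}-m_s), and
suppose δ ≤ T_{s-1}, where T_{s-1} = (γ + l₁ d)/l₁ is the y-intercept of the line through
the two vertices (the segment joining them being an edge, i.e. an exposed face, of N(q)).
Then l₁δ ≤ γ + l₁d ≤ i + l₁j for every (i,j) with b_{ij} ≠ 0. -/
theorem stmt1
    (S : Set (ℕ × ℕ)) (N : Set (ℝ × ℝ))
    (hN : N = convexHull ℝ (⋃ p ∈ S, {x : ℝ × ℝ | (p.1 : ℝ) ≤ x.1 ∧ (p.2 : ℝ) ≤ x.2}))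
    (n' m' γ d δ : ℕ) (hδ : 2 ≤ δ)
    (hn : n' < γ) (hm : d < m')
    (l1 : ℝ) (hl1 : l1 = ((γ : ℝ) - n') / ((m' : ℝ) - d))
    (hface : IsExposed ℝ N (segment ℝ (((n' : ℝ), (m' : ℝ))) (((γ : ℝ), (d : ℝ)))))
    (T : ℝ) (hT : T = ((γ : ℝ) + l1 * d) / l1)
    (hδT : (δ : ℝ) ≤ T) :
    ∀ p ∈ S, l1 * δ ≤ (γ : ℝ) + l1 * d ∧ (γ : ℝ) + l1 * d ≤ (p.1 : ℝ) + l1 * p.2 :=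
  stmt1_general S N hN n' m' γ d δ hn hm l1 hl1 hface T hT hδT
end

section
/- Let f(z,w) = (p(z), q(z,w)) with p(z) = z^δ and q(z,w) = z^γ w^d(1 + η(z,w)), where |η| < ε on U_r = {0 < |z| < r, |w| < r|z|^l}, and assume γ + l d ≥ l δ and d ≥ 2. Then for all sufficiently small r > 0, f(U_r) ⊆ U_r. -/
/-!
Take r ≤ 1/2. On U_r one has |z|^δ ≤ |z| < r, and
|z^γ w^d (1 + η)| ≤ r^d |z|^(γ + l d) (1 + ε) ≤ r^d (1 + ε) |z|^(l δ),
where the last step uses |z| < 1 and γ + l d ≥ l δ. Since d ≥ 2, r ≤ 1/2 and ε < 1,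
the factor r^d (1 + ε) ≤ r · r (1 + ε) is smaller than r.
-/

open Real

lemma pow_mul_rpow_pow_le_pow_rpow {x l : ℝ} {γ d δ : ℕ} (hx0 : 0 < x) (hx1 : x ≤ 1)
    (hld : l * δ ≤ (γ : ℝ) + l * d) :
    x ^ γ * (x ^ l) ^ d ≤ (x ^ δ) ^ l := by
  have lhs : x ^ γ * (x ^ l) ^ d = x ^ ((γ : ℝ) + l * d) := by
    rw [← rpow_natCast (x ^ l) d, ← rpow_mul hx0.le, rpow_add hx0, rpow_natCast]
  have rhs : (x ^ δ) ^ l = x ^ (l * δ) := by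
    rw [← rpow_natCast x δ, ← rpow_mul hx0.le, mul_comm]
  rw [lhs, rhs]
  exact rpow_le_rpow_of_exponent_ge hx0 hx1 hld

lemma pow_mul_one_add_lt_self {r ε : ℝ} {d : ℕ} (hr0 : 0 < r) (hr : r ≤ 1 / 2)
    (hε1 : ε < 1) (hd : 2 ≤ d) :
    r ^ d * (1 + ε) < r := by
  have hrd : r ^ d ≤ r ^ 2 := pow_le_pow_of_le_one hr0.le (by linarith) hd
  nlinarith [pow_pos hr0 d]

lemma pow_mul_pow_mul_lt_mul_pow_rpow {a b c r ε l : ℝ} {γ d δ : ℕ}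
    (ha0 : 0 < a) (har : a < r) (hr : r ≤ 1 / 2) (hbr : b < r * a ^ l) (hb0 : 0 ≤ b)
    (hc0 : 0 ≤ c) (hc : c ≤ 1 + ε) (hε1 : ε < 1) (hd : 2 ≤ d)
    (hld : l * δ ≤ (γ : ℝ) + l * d) :
    a ^ γ * b ^ d * c < r * (a ^ δ) ^ l := by
  have hr0 : 0 < r := ha0.trans har
  calc a ^ γ * b ^ d * c
      ≤ a ^ γ * (r * a ^ l) ^ d * (1 + ε) := by gcongr
    _ = r ^ d * (1 + ε) * (a ^ γ * (a ^ l) ^ d) := by ring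
    _ ≤ r ^ d * (1 + ε) * (a ^ δ) ^ l := by
        have : 0 ≤ 1 + ε := hc0.trans hc
        gcongr
        exact pow_mul_rpow_pow_le_pow_rpow ha0 (by linarith) hld
    _ < r * (a ^ δ) ^ l := by
        gcongr
        exact pow_mul_one_add_lt_self hr0 hr hε1 hd

theorem stmt4_general
    (δ d γ : ℕ) (hδ : 2 ≤ δ) (hd : 2 ≤ d)
    (l : ℝ) (hld : l * δ ≤ (γ : ℝ) + l * d)
    (ε : ℝ) (hε1 : ε < 1)
    (η : ℂ → ℂ → ℂ) (r1 : ℝ) (hr1 : 0 < r1)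
    (hη : ∀ z w : ℂ, 0 < ‖z‖ → ‖z‖ < r1 → ‖w‖ < r1 * ‖z‖ ^ l → ‖η z w‖ < ε) :
    ∃ r0, 0 < r0 ∧ r0 ≤ r1 ∧ ∀ r, 0 < r → r ≤ r0 → ∀ z w : ℂ,
      0 < ‖z‖ → ‖z‖ < r → ‖w‖ < r * ‖z‖ ^ l →
      (0 < ‖z ^ δ‖ ∧ ‖z ^ δ‖ < r ∧
        ‖z ^ γ * w ^ d * (1 + η z w)‖ < r * ‖z ^ δ‖ ^ l) := by
  refine ⟨min r1 (1 / 2), lt_min hr1 (by norm_num), min_le_left _ _, ?_⟩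
  intro r hr hrle z w hz hzr hwr
  have hrr1 : r ≤ r1 := hrle.trans (min_le_left _ _)
  have hr_half : r ≤ 1 / 2 := hrle.trans (min_le_right _ _)
  have hηε : ‖η z w‖ < ε :=
    hη z w hz (hzr.trans_le hrr1) (hwr.trans_le (by gcongr))
  have hone : ‖1 + η z w‖ ≤ 1 + ε :=
    (norm_add_le _ _).trans (by rw [norm_one]; linarith)
  simp only [norm_mul, norm_pow]
  refine ⟨by positivity, ?_, ?_⟩
  · exact (pow_le_of_le_one hz.le (by linarith) (by omega)).trans_lt hzr
  · exact pow_mul_pow_mul_lt_mul_pow_rpow hz hzr hr_half hwr (norm_nonneg _)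
      (norm_nonneg _) hone hε1 hd hld

/-- invariance of U_r, Case 2: for f(z,w) = (z^δ, z^γ w^d (1 + η(z,w)))
with |η| < ε on U_{r₁} = {0 < |z| < r₁, |w| < r₁|z|^l}, γ + l·d ≥ l·δ and d ≥ 2,
one has f(U_r) ⊆ U_r for all sufficiently small r > 0. -/
theorem stmt4
    (δ d γ : ℕ) (hδ : 2 ≤ δ) (hd : 2 ≤ d)
    (l : ℝ) (hl : 0 ≤ l) (hld : l * δ ≤ (γ : ℝ) + l * d)
    (ε : ℝ) (hε : 0 < ε) (hε1 : ε < 1)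
    (η : ℂ → ℂ → ℂ) (r1 : ℝ) (hr1 : 0 < r1)
    (hη : ∀ z w : ℂ, 0 < ‖z‖ → ‖z‖ < r1 → ‖w‖ < r1 * ‖z‖ ^ l → ‖η z w‖ < ε) :
    ∃ r0, 0 < r0 ∧ r0 ≤ r1 ∧ ∀ r, 0 < r → r ≤ r0 → ∀ z w : ℂ,
      0 < ‖z‖ → ‖z‖ < r → ‖w‖ < r * ‖z‖ ^ l →
      (0 < ‖z ^ δ‖ ∧ ‖z ^ δ‖ < r ∧
        ‖z ^ γ * w ^ d * (1 + η z w)‖ < r * ‖z ^ δ‖ ^ l) :=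
  stmt4_general δ d γ hδ hd l hld ε hε1 η r1 hr1 hη
end

section
/- Let f(z,w) = (p(z), q(z,w)) with p(z) = z^δ and q(z,w) = z^γ w^d(1 + η(z,w)), where |η| < ε on U_r = {|z| < r|w|^{l}, 0 < |w| < r} for l = l_2^{-1} ≥ 0, and assume δ ≥ l γ + d and d ≥ 2. Then for all sufficiently small r > 0, f(U_r) ⊆ U_r. -/
/-!
With `a = ‖z‖`, `b = ‖w‖` and `c = ‖1 + η z w‖ ∈ [1 - ε, 2]` everything reduces to two real
inequalities, both using `a, b < 1`. For the second coordinate, `d ≥ 2` gives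
`a ^ γ * b ^ d * c ≤ 2 b ^ 2 < 2 r ^ 2 ≤ r` once `r ≤ 1/2`. For the first, `δ ≥ l γ + d` gives
`a ^ δ ≤ (a ^ l) ^ γ * a ^ d`, and `a < r b ^ l` bounds `a ^ d` by `r ^ d (b ^ l) ^ d ≤ r · r (b ^ l) ^ d`;
the spare factor `r ≤ (1 - ε) ^ l` absorbs the perturbation `c ≥ 1 - ε`.
-/

lemma one_sub_norm_le_norm_one_add {R : Type*} [SeminormedRing R] [NormOneClass R] (x : R) :
    1 - ‖x‖ ≤ ‖1 + x‖ := by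
  simpa using norm_sub_norm_le (1 : R) (-x)

lemma pow_le_rpow_mul_pow {a l : ℝ} {δ γ d : ℕ} (ha : 0 < a) (ha1 : a ≤ 1)
    (hld : l * γ + d ≤ δ) : a ^ δ ≤ (a ^ l) ^ γ * a ^ d := by
  rw [← Real.rpow_mul_natCast ha.le, ← Real.rpow_natCast a δ, ← Real.rpow_natCast a d,
    ← Real.rpow_add ha]
  exact Real.rpow_le_rpow_of_exponent_ge ha ha1 hld

lemma pow_lt_mul_rpow_of_lt_mul_rpow {a b c m r l : ℝ} {δ γ d : ℕ}
    (ha : 0 < a) (ha1 : a ≤ 1) (hb : 0 < b) (hab : a < r * b ^ l) (hr1 : r ≤ 1)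
    (hm : 0 < m) (hmc : m ≤ c) (hrm : r ≤ m ^ l) (hl : 0 ≤ l) (hd : 2 ≤ d)
    (hld : l * γ + d ≤ δ) :
    a ^ δ < r * (a ^ γ * b ^ d * c) ^ l := by
  have hr : 0 < r := pos_of_mul_pos_left (ha.trans hab) (Real.rpow_nonneg hb.le l)
  have hrd : r ^ d ≤ r * m ^ l :=
    calc r ^ d ≤ r ^ 2 := pow_le_pow_of_le_one hr.le hr1 hd
      _ ≤ r * m ^ l := by rw [sq]; gcongr
  have hrhs : (a ^ γ * b ^ d * m) ^ l = (a ^ l) ^ γ * (b ^ l) ^ d * m ^ l := by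
    rw [Real.mul_rpow (by positivity) hm.le, Real.mul_rpow (by positivity) (by positivity),
      Real.rpow_pow_comm ha.le, Real.rpow_pow_comm hb.le]
  calc a ^ δ ≤ (a ^ l) ^ γ * a ^ d := pow_le_rpow_mul_pow ha ha1 hld
    _ < (a ^ l) ^ γ * (r * b ^ l) ^ d := by gcongr
    _ = (a ^ l) ^ γ * (b ^ l) ^ d * r ^ d := by ring
    _ ≤ (a ^ l) ^ γ * (b ^ l) ^ d * (r * m ^ l) := by gcongr
    _ = r * (a ^ γ * b ^ d * m) ^ l := by rw [hrhs]; ring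
    _ ≤ r * (a ^ γ * b ^ d * c) ^ l := by gcongr

lemma pow_mul_pow_mul_lt {a b c r : ℝ} {γ d : ℕ} (ha : 0 ≤ a) (ha1 : a ≤ 1) (hb : 0 ≤ b)
    (hbr : b < r) (hr : r ≤ 1 / 2) (hd : 2 ≤ d) (hc : 0 ≤ c) (hc2 : c ≤ 2) :
    a ^ γ * b ^ d * c < r := by
  have hbd : b ^ d ≤ b ^ 2 := pow_le_pow_of_le_one hb (by linarith) hd
  calc a ^ γ * b ^ d * c ≤ 1 * b ^ 2 * 2 := by gcongr; exact pow_le_one₀ ha ha1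
    _ < r := by nlinarith

theorem stmt5_general
    (δ d γ : ℕ) (hd : 2 ≤ d)
    (l : ℝ) (hl : 0 ≤ l) (hld : l * γ + d ≤ (δ : ℝ))
    (ε : ℝ) (hε1 : ε < 1)
    (η : ℂ → ℂ → ℂ) (r1 : ℝ) (hr1 : 0 < r1)
    (hη : ∀ z w : ℂ, 0 < ‖z‖ → ‖z‖ < r1 * ‖w‖ ^ l → 0 < ‖w‖ → ‖w‖ < r1 → ‖η z w‖ < ε) :
    ∃ r0, 0 < r0 ∧ r0 ≤ r1 ∧ ∀ r, 0 < r → r ≤ r0 → ∀ z w : ℂ,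
      0 < ‖z‖ → ‖z‖ < r * ‖w‖ ^ l → 0 < ‖w‖ → ‖w‖ < r →
      (0 < ‖z ^ δ‖ ∧ ‖z ^ δ‖ < r * ‖z ^ γ * w ^ d * (1 + η z w)‖ ^ l ∧
        0 < ‖z ^ γ * w ^ d * (1 + η z w)‖ ∧ ‖z ^ γ * w ^ d * (1 + η z w)‖ < r) := by
  have hm : 0 < 1 - ε := by linarith
  refine ⟨min r1 (min (1 / 2) ((1 - ε) ^ l)), by positivity, min_le_left _ _, ?_⟩
  intro r hr hr0 z w hz hzw hw hwr
  simp only [le_min_iff] at hr0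
  obtain ⟨hrr1, hr2, hrm⟩ := hr0
  have hz1 : ‖z‖ ≤ 1 := hzw.le.trans <|
    mul_le_one₀ (by linarith) (by positivity) (Real.rpow_le_one hw.le (by linarith) hl)
  have hηzw : ‖η z w‖ < ε :=
    hη z w hz (hzw.trans_le (by gcongr)) hw (hwr.trans_le hrr1)
  have hc1 : 1 - ε ≤ ‖1 + η z w‖ := by linarith [one_sub_norm_le_norm_one_add (η z w)]
  have hc2 : ‖1 + η z w‖ ≤ 2 := by linarith [norm_add_le (1 : ℂ) (η z w), norm_one (α := ℂ)]
  simp only [norm_mul, norm_pow]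
  refine ⟨by positivity, ?_, mul_pos (by positivity) (hm.trans_le hc1), ?_⟩
  · exact pow_lt_mul_rpow_of_lt_mul_rpow hz hz1 hw hzw (by linarith) hm hc1 hrm hl hd hld
  · exact pow_mul_pow_mul_lt hz.le hz1 hw.le hwr hr2 hd (norm_nonneg _) hc2

/-- invariance of U_r, Case 3: for f(z,w) = (z^δ, z^γ w^d (1 + η(z,w)))
with |η| < ε on U_{r₁} = {0 < |z| < r₁|w|^l, 0 < |w| < r₁}, where l = l₂⁻¹ ≥ 0,
δ ≥ l·γ + d and d ≥ 2, one has f(U_r) ⊆ U_r for all sufficiently small r > 0. -/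
theorem stmt5
    (δ d γ : ℕ) (hδ : 2 ≤ δ) (hd : 2 ≤ d)
    (l : ℝ) (hl : 0 ≤ l) (hld : l * γ + d ≤ (δ : ℝ))
    (ε : ℝ) (hε : 0 < ε) (hε1 : ε < 1)
    (η : ℂ → ℂ → ℂ) (r1 : ℝ) (hr1 : 0 < r1)
    (hη : ∀ z w : ℂ, 0 < ‖z‖ → ‖z‖ < r1 * ‖w‖ ^ l → 0 < ‖w‖ → ‖w‖ < r1 → ‖η z w‖ < ε) :
    ∃ r0, 0 < r0 ∧ r0 ≤ r1 ∧ ∀ r, 0 < r → r ≤ r0 → ∀ z w : ℂ,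
      0 < ‖z‖ → ‖z‖ < r * ‖w‖ ^ l → 0 < ‖w‖ → ‖w‖ < r →
      (0 < ‖z ^ δ‖ ∧ ‖z ^ δ‖ < r * ‖z ^ γ * w ^ d * (1 + η z w)‖ ^ l ∧
        0 < ‖z ^ γ * w ^ d * (1 + η z w)‖ ∧ ‖z ^ γ * w ^ d * (1 + η z w)‖ < r) :=
  stmt5_general δ d γ hd l hl hld ε hε1 η r1 hr1 hη
end

section
/- With l_1, l_2 as in Case 4 and setting γ̃ = γ + l_1 d - l_1 δ, ĩ = i + l_1 j - l_1 δ, d̃ = l_2^{-1} γ̃ + d, j̃ = l_2^{-1} ĩ + j, one has 0 ≤ γ̃ ≤ ĩ and d ≤ d̃ ≤ j̃ for every (i,j) with b_{ij} ≠ 0, provided T_k ≤ δ ≤ T_{k-1}. -/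
/-!
Both inequalities for a point `(i, j)` are the supporting-line inequalities of the two Newton
polygon edges through `(γ, d)`, read in the new coordinates: `ĩ - γ̃` is the excess of `(i, j)`
over the edge `L_{k-1}` of slope `-l₁⁻¹`, and `l₂ (j̃ - d̃)` is its excess over the edge `L_k`
of slope `-(l₁ + l₂)⁻¹`. The bound `0 ≤ γ̃` is `δ ≤ T_{k-1}` multiplied by `l₁`.
-/

section LinearOrderedField

variable {K : Type*} [Field K] [LinearOrder K] [IsStrictOrderedRing K]

theorem sub_mul_nonneg_of_le_inv_mul_add {l a b c : K} (hl : 0 < l) (h : c ≤ l⁻¹ * a + b) :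
    0 ≤ a + l * b - l * c := by
  have hlc : l * c ≤ a + l * b := by
    calc l * c ≤ l * (l⁻¹ * a + b) := mul_le_mul_of_nonneg_left h hl.le
      _ = a + l * b := by field_simp
  linarith

theorem inv_mul_sub_add_le_of_add_mul_le {l m a b a' b' c : K} (hm : 0 < m)
    (h : a + (l + m) * b ≤ a' + (l + m) * b') :
    m⁻¹ * (a + l * b - c) + b ≤ m⁻¹ * (a' + l * b' - c) + b' := by
  have hdiff : m⁻¹ * (a' + l * b' - c) + b' - (m⁻¹ * (a + l * b - c) + b) =
      m⁻¹ * (a' + (l + m) * b' - (a + (l + m) * b)) := by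
    field_simp
    ring
  rw [← sub_nonneg, hdiff]
  exact mul_nonneg (inv_nonneg.mpr hm.le) (sub_nonneg.mpr h)

end LinearOrderedField

theorem stmt7_general
    (S : Set (ℕ × ℕ)) (γ d δ : ℕ)
    (l1 l2 : ℝ) (h1 : 0 < l1) (h2 : 0 < l2)
    (hsupp1 : ∀ p ∈ S, (γ : ℝ) + l1 * d ≤ (p.1 : ℝ) + l1 * p.2)
    (hsupp2 : ∀ p ∈ S, (γ : ℝ) + (l1 + l2) * d ≤ (p.1 : ℝ) + (l1 + l2) * p.2)
    (hTk1 : (δ : ℝ) ≤ l1⁻¹ * γ + d) :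
    ∀ p ∈ S,
      0 ≤ (γ : ℝ) + l1 * d - l1 * δ ∧
      (γ : ℝ) + l1 * d - l1 * δ ≤ (p.1 : ℝ) + l1 * p.2 - l1 * δ ∧
      (d : ℝ) ≤ l2⁻¹ * ((γ : ℝ) + l1 * d - l1 * δ) + d ∧
      l2⁻¹ * ((γ : ℝ) + l1 * d - l1 * δ) + d ≤
        l2⁻¹ * ((p.1 : ℝ) + l1 * p.2 - l1 * δ) + p.2 := by
  intro p hp
  have hγ : 0 ≤ (γ : ℝ) + l1 * d - l1 * δ := sub_mul_nonneg_of_le_inv_mul_add h1 hTk1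
  exact ⟨hγ, sub_le_sub_right (hsupp1 p hp) _,
    le_add_of_nonneg_left (mul_nonneg (inv_nonneg.mpr h2.le) hγ),
    inv_mul_sub_add_le_of_add_mul_le h2 (hsupp2 p hp)⟩

/-- In Case 4, with γ̃ = γ + l₁d - l₁δ, ĩ = i + l₁j - l₁δ,
d̃ = l₂⁻¹γ̃ + d and j̃ = l₂⁻¹ĩ + j, and the supporting-line properties of the
Newton polygon edges L_{k-1} (slope -l₁⁻¹) and L_k (slope -(l₁+l₂)⁻¹) through the
vertex (γ,d), provided T_k ≤ δ ≤ T_{k-1} one has 0 ≤ γ̃ ≤ ĩ and d ≤ d̃ ≤ j̃ for every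
(i,j) with b_{ij} ≠ 0. -/
theorem stmt7
    (S : Set (ℕ × ℕ)) (γ d δ : ℕ) (hδ : 2 ≤ δ)
    (l1 l2 : ℝ) (h1 : 0 < l1) (h2 : 0 < l2)
    (hsupp1 : ∀ p ∈ S, (γ : ℝ) + l1 * d ≤ (p.1 : ℝ) + l1 * p.2)
    (hsupp2 : ∀ p ∈ S, (γ : ℝ) + (l1 + l2) * d ≤ (p.1 : ℝ) + (l1 + l2) * p.2)
    (hTk : (l1 + l2)⁻¹ * γ + d ≤ (δ : ℝ))
    (hTk1 : (δ : ℝ) ≤ l1⁻¹ * γ + d) :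
    ∀ p ∈ S,
      0 ≤ (γ : ℝ) + l1 * d - l1 * δ ∧
      (γ : ℝ) + l1 * d - l1 * δ ≤ (p.1 : ℝ) + l1 * p.2 - l1 * δ ∧
      (d : ℝ) ≤ l2⁻¹ * ((γ : ℝ) + l1 * d - l1 * δ) + d ∧
      l2⁻¹ * ((γ : ℝ) + l1 * d - l1 * δ) + d ≤
        l2⁻¹ * ((p.1 : ℝ) + l1 * p.2 - l1 * δ) + p.2 :=
  stmt7_general S γ d δ l1 l2 h1 h2 hsupp1 hsupp2 hTk1
end

section
/- Let δ > d ≥ 1 and γ > 0 be integers (Case 2 with δ > d). Then the set I_f = {l > 0 : l δ ≤ γ + l d ≤ i + l j for all (i,j) with b_{ij} ≠ 0} equals the closed interval [max over (i,j) with j > d of (γ-i)/(j-d), γ/(δ-d)], and its minimum is l_1 = (n_s - n_{s-1})/(m_{s-1} - m_s), where (γ,d) = (n_s,m_s) is the last Newton polygon vertex. -/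
/-! For `l > 0`, each monomial `(i, j)` with `j > d` imposes the lower bound
`l ≥ (γ - i)/(j - d)`, the monomials with `j = d` impose nothing, and `l δ ≤ γ + l d`
is the upper bound `l ≤ γ/(δ - d)`. So `I_f` is the interval between the largest of these
slopes, `l₁`, and `γ/(δ - d)`; it is nonempty because `l₁ > 0` and the hypothesis
`δ ≤ T_{s-1} = γ/l₁ + d` says exactly that `l₁ ≤ γ/(δ - d)`. -/

section LinearOrderedField

variable {K : Type*} [Field K] [LinearOrder K] [IsStrictOrderedRing K]

theorem div_sub_le_iff_add_mul_le {γ i d j l : K} (hdj : d < j) :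
    (γ - i) / (j - d) ≤ l ↔ γ + l * d ≤ i + l * j := by
  rw [div_le_iff₀ (sub_pos.2 hdj)]
  constructor <;> intro h <;> linarith

theorem le_div_sub_iff_mul_le_add_mul {γ d δ l : K} (hdδ : d < δ) :
    l ≤ γ / (δ - d) ↔ l * δ ≤ γ + l * d := by
  rw [le_div_iff₀ (sub_pos.2 hdδ)]
  constructor <;> intro h <;> linarith

theorem le_div_sub_of_le_inv_mul_add {γ d δ l : K} (hl : 0 < l) (hdδ : d < δ)
    (hδ : δ ≤ l⁻¹ * γ + d) : l ≤ γ / (δ - d) := by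
  rw [le_div_sub_iff_mul_le_add_mul hdδ]
  calc l * δ ≤ l * (l⁻¹ * γ + d) := mul_le_mul_of_nonneg_left hδ hl.le
    _ = γ + l * d := by field_simp

theorem forall_add_mul_le_iff_le {S : Set (ℕ × ℕ)} {γ d : ℕ} (hj : ∀ p ∈ S, d ≤ p.2)
    (hjd : ∀ p ∈ S, p.2 = d → γ ≤ p.1) {l1 : K}
    (hmax : IsGreatest {x : K | ∃ p ∈ S, d < p.2 ∧ x = ((γ : K) - p.1) / ((p.2 : K) - d)} l1)
    (l : K) : (∀ p ∈ S, (γ : K) + l * d ≤ (p.1 : K) + l * p.2) ↔ l1 ≤ l := by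
  rw [isLUB_le_iff hmax.isLUB]
  constructor
  · rintro h _ ⟨p, hp, hdp, rfl⟩
    exact (div_sub_le_iff_add_mul_le (by exact_mod_cast hdp)).2 (h p hp)
  · intro h p hp
    rcases (hj p hp).eq_or_lt with hdp | hdp
    · have hγp : (γ : K) ≤ p.1 := by exact_mod_cast hjd p hp hdp.symm
      rw [← hdp]
      linarith
    · exact (div_sub_le_iff_add_mul_le (by exact_mod_cast hdp)).1 (h ⟨p, hp, hdp, rfl⟩)

end LinearOrderedField

theorem stmt8_general
    (S : Set (ℕ × ℕ)) (γ d δ n' m' : ℕ)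
    (hδd : d < δ)
    (hn : n' < γ) (hm : d < m') (hmem : (n', m') ∈ S)
    (hj : ∀ p ∈ S, d ≤ p.2)
    (hjd : ∀ p ∈ S, p.2 = d → γ ≤ p.1)
    (l1 : ℝ)
    (hmax : IsGreatest {x : ℝ | ∃ p ∈ S, d < p.2 ∧ x = ((γ : ℝ) - p.1) / ((p.2 : ℝ) - d)} l1)
    (hT : (δ : ℝ) ≤ l1⁻¹ * γ + d)
    (I : Set ℝ)
    (hI : I = {l : ℝ | 0 < l ∧ l * δ ≤ (γ : ℝ) + l * d ∧
      ∀ p ∈ S, (γ : ℝ) + l * d ≤ (p.1 : ℝ) + l * p.2}) :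
    I = Set.Icc l1 ((γ : ℝ) / ((δ : ℝ) - d)) ∧ IsLeast I l1 := by
  have hδd' : (d : ℝ) < δ := by exact_mod_cast hδd
  have hl1_pos : 0 < l1 := by
    have hslope : 0 < ((γ : ℝ) - n') / ((m' : ℝ) - d) :=
      div_pos (sub_pos.2 (by exact_mod_cast hn)) (sub_pos.2 (by exact_mod_cast hm))
    exact hslope.trans_le (hmax.2 ⟨(n', m'), hmem, hm, rfl⟩)
  have hI_eq : I = Set.Icc l1 ((γ : ℝ) / ((δ : ℝ) - d)) := by
    ext l
    rw [hI, Set.mem_ofPred_eq, Set.mem_Icc, forall_add_mul_le_iff_le hj hjd hmax,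
      le_div_sub_iff_mul_le_add_mul hδd']
    constructor
    · rintro ⟨-, hδ, hl1⟩
      exact ⟨hl1, hδ⟩
    · rintro ⟨hl1, hδ⟩
      exact ⟨hl1_pos.trans_le hl1, hδ, hl1⟩
  refine ⟨hI_eq, ?_, fun l hl => (hI_eq ▸ hl).1⟩
  rw [hI_eq]
  exact ⟨le_rfl, le_div_sub_of_le_inv_mul_add hl1_pos hδd' hT⟩

/-- In Case 2 with δ > d ≥ 1, γ > 0, (γ,d) = (n_s,m_s) the last vertex of
the Newton polygon and (n',m') = (n_{s-1},m_{s-1}) the previous one, assuming δ ≤ T_{s-1},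
the interval I_f = {l > 0 : lδ ≤ γ + ld ≤ i + lj for all (i,j) with b_{ij} ≠ 0} equals
[l₁, γ/(δ-d)], where l₁ = (n_s-n_{s-1})/(m_{s-1}-m_s) is the maximum of (γ-i)/(j-d) over
support points with j > d, and l₁ is the minimum of I_f. -/
theorem stmt8
    (S : Set (ℕ × ℕ)) (γ d δ n' m' : ℕ)
    (hδd : d < δ) (hd : 1 ≤ d) (hγ : 0 < γ)
    (hn : n' < γ) (hm : d < m') (hmem : (n', m') ∈ S)
    (hj : ∀ p ∈ S, d ≤ p.2)
    (hjd : ∀ p ∈ S, p.2 = d → γ ≤ p.1)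
    (l1 : ℝ) (hl1 : l1 = ((γ : ℝ) - n') / ((m' : ℝ) - d))
    (hmax : IsGreatest {x : ℝ | ∃ p ∈ S, d < p.2 ∧ x = ((γ : ℝ) - p.1) / ((p.2 : ℝ) - d)} l1)
    (hT : (δ : ℝ) ≤ l1⁻¹ * γ + d)
    (I : Set ℝ)
    (hI : I = {l : ℝ | 0 < l ∧ l * δ ≤ (γ : ℝ) + l * d ∧
      ∀ p ∈ S, (γ : ℝ) + l * d ≤ (p.1 : ℝ) + l * p.2}) :
    I = Set.Icc l1 ((γ : ℝ) / ((δ : ℝ) - d)) ∧ IsLeast I l1 :=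
  stmt8_general S γ d δ n' m' hδd hn hm hmem hj hjd l1 hmax hT I hI
end

section
/- The interval I_f of Case 2 is nonempty if and only if δ ≤ T_{s-1}, where T_{s-1} is the y-intercept of the line through the last two vertices of the Newton polygon of q. -/
/-!
For `l > 0`, points of `S` at height `d` impose nothing on `l` (they lie right of `γ`), while a
point `(i, j)` with `j > d` imposes `(γ - i) / (j - d) ≤ l`; so the last condition says `l₁ ≤ l`.
The condition `l δ ≤ γ + l d` reads `δ ≤ γ / l + d`, which is weakest at the smallest admissible
slope `l = l₁`.
-/

section OrderedField

variable {K : Type*} [Field K] [LinearOrder K] [IsStrictOrderedRing K]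

lemma add_mul_le_add_mul_iff_div_le {a b c e l : K} (hce : c < e) :
    a + l * c ≤ b + l * e ↔ (a - b) / (e - c) ≤ l := by
  rw [div_le_iff₀ (sub_pos.2 hce)]
  constructor <;> intro h <;> linarith

lemma mul_le_add_mul_iff_le_inv_mul_add {a b c l : K} (hl : 0 < l) :
    l * a ≤ b + l * c ↔ a ≤ l⁻¹ * b + c := by
  rw [inv_mul_eq_div, div_add' _ _ _ hl.ne', le_div_iff₀ hl]
  constructor <;> intro h <;> linarith

end OrderedField

theorem stmt9_general
    (S : Set (ℕ × ℕ)) (γ d δ n' m' : ℕ)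
    (hn : n' < γ) (hm : d < m') (hmem : (n', m') ∈ S)
    (hj : ∀ p ∈ S, d ≤ p.2)
    (hjd : ∀ p ∈ S, p.2 = d → γ ≤ p.1)
    (l1 : ℝ) (hl1 : l1 = ((γ : ℝ) - n') / ((m' : ℝ) - d))
    (hmax : IsGreatest {x : ℝ | ∃ p ∈ S, d < p.2 ∧ x = ((γ : ℝ) - p.1) / ((p.2 : ℝ) - d)} l1)
    (I : Set ℝ)
    (hI : I = {l : ℝ | 0 < l ∧ l * δ ≤ (γ : ℝ) + l * d ∧
      ∀ p ∈ S, (γ : ℝ) + l * d ≤ (p.1 : ℝ) + l * p.2}) :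
    I.Nonempty ↔ (δ : ℝ) ≤ l1⁻¹ * γ + d := by
  subst hI
  have hdm : (d : ℝ) < m' := by exact_mod_cast hm
  have hl1pos : 0 < l1 := hl1 ▸ div_pos (sub_pos.2 (by exact_mod_cast hn)) (sub_pos.2 hdm)
  constructor
  · rintro ⟨l, hlpos, hlδ, hlS⟩
    have hl1l : l1 ≤ l := hl1 ▸ (add_mul_le_add_mul_iff_div_le hdm).1 (hlS _ hmem)
    calc (δ : ℝ) ≤ l⁻¹ * γ + d := (mul_le_add_mul_iff_le_inv_mul_add hlpos).1 hlδ
      _ ≤ l1⁻¹ * γ + d := by gcongr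
  · intro h
    refine ⟨l1, hl1pos, (mul_le_add_mul_iff_le_inv_mul_add hl1pos).2 h, fun p hp => ?_⟩
    rcases (hj p hp).lt_or_eq with hlt | heq
    · exact (add_mul_le_add_mul_iff_div_le (by exact_mod_cast hlt)).2 (hmax.2 ⟨p, hp, hlt, rfl⟩)
    · rw [← heq, add_le_add_iff_right]
      exact_mod_cast hjd p hp heq.symm

/-- In Case 2, the interval I_f = {l > 0 : lδ ≤ γ + ld ≤ i + lj for all
(i,j) with b_{ij} ≠ 0} is nonempty if and only if δ ≤ T_{s-1} = l₁⁻¹γ + d, the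
y-intercept of the line through the last two vertices (n_{s-1},m_{s-1}), (γ,d) = (n_s,m_s)
of the Newton polygon of q. -/
theorem stmt9
    (S : Set (ℕ × ℕ)) (γ d δ n' m' : ℕ) (hδ : 2 ≤ δ) (hd : 1 ≤ d)
    (hn : n' < γ) (hm : d < m') (hmem : (n', m') ∈ S)
    (hj : ∀ p ∈ S, d ≤ p.2)
    (hjd : ∀ p ∈ S, p.2 = d → γ ≤ p.1)
    (l1 : ℝ) (hl1 : l1 = ((γ : ℝ) - n') / ((m' : ℝ) - d))
    (hmax : IsGreatest {x : ℝ | ∃ p ∈ S, d < p.2 ∧ x = ((γ : ℝ) - p.1) / ((p.2 : ℝ) - d)} l1)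
    (I : Set ℝ)
    (hI : I = {l : ℝ | 0 < l ∧ l * δ ≤ (γ : ℝ) + l * d ∧
      ∀ p ∈ S, (γ : ℝ) + l * d ≤ (p.1 : ℝ) + l * p.2}) :
    I.Nonempty ↔ (δ : ℝ) ≤ l1⁻¹ * γ + d :=
  stmt9_general S γ d δ n' m' hn hm hmem hj hjd l1 hl1 hmax I hI
end

section
/- Let δ ≥ 2, d ≥ 1, γ ≥ 0 with γ + d ≥ 2, and (γ,d) = (n_1,m_1) the first Newton polygon vertex (Case 3). The set I_f = {l > 0 : γ + l d ≤ i + l j and γ + l d ≤ l δ for all (i,j) with b_{ij} ≠ 0} satisfies: if γ > 0 then I_f = [γ/(δ-d), l_2] (nonempty iff T_1 ≤ δ), and if γ = 0 then I_f = (0, l_2], where l_2 = (n_2-n_1)/(m_1-m_2). -/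
/-!
A support point `(i, j)` with `j < d` constrains the weight `l` by `l ≤ (i - γ) / (d - j)`,
while a point with `j ≥ d` imposes nothing, since `γ ≤ i`. Hence the support conditions
cut out exactly `(0, l₂]`, with `l₂` the least such slope; it is positive because the only
support points on the vertical line `i = γ` lie above the vertex. The remaining condition
`γ + l d ≤ l δ` reads `γ / (δ - d) ≤ l` when `d < δ`, and is automatic when `γ = 0`.
-/

def vertexSlopes (S : Set (ℕ × ℕ)) (γ d : ℕ) : Set ℝ :=
  {x : ℝ | ∃ p ∈ S, p.2 < d ∧ x = ((p.1 : ℝ) - γ) / ((d : ℝ) - p.2)}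

theorem add_mul_le_add_mul_iff_le_div {γ d i j l : ℝ} (hj : j < d) :
    γ + l * d ≤ i + l * j ↔ l ≤ (i - γ) / (d - j) := by
  rw [le_div_iff₀ (sub_pos.2 hj)]
  constructor <;> intro h <;> linarith

section VertexSlopes

variable {S : Set (ℕ × ℕ)} {γ d : ℕ} {l2 : ℝ}

theorem pos_of_isLeast_vertexSlopes (hi : ∀ p ∈ S, γ ≤ p.1)
    (hij : ∀ p ∈ S, p.1 = γ → d ≤ p.2) (hmin : IsLeast (vertexSlopes S γ d) l2) :
    0 < l2 := by
  obtain ⟨p, hpS, hpd, rfl⟩ := hmin.1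
  have hp1 : γ < p.1 := (hi p hpS).lt_of_ne fun h ↦ (hij p hpS h.symm).not_gt hpd
  have hp1' : (γ : ℝ) < p.1 := by exact_mod_cast hp1
  have hpd' : (p.2 : ℝ) < d := by exact_mod_cast hpd
  exact div_pos (sub_pos.2 hp1') (sub_pos.2 hpd')

theorem forall_add_mul_le_iff_le_of_isLeast (hi : ∀ p ∈ S, γ ≤ p.1)
    (hmin : IsLeast (vertexSlopes S γ d) l2) {l : ℝ} (hl : 0 ≤ l) :
    (∀ p ∈ S, (γ : ℝ) + l * d ≤ (p.1 : ℝ) + l * p.2) ↔ l ≤ l2 := by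
  constructor
  · intro h
    obtain ⟨p, hpS, hpd, rfl⟩ := hmin.1
    exact (add_mul_le_add_mul_iff_le_div (by exact_mod_cast hpd)).1 (h p hpS)
  · intro h p hpS
    by_cases hpd : p.2 < d
    · exact (add_mul_le_add_mul_iff_le_div (by exact_mod_cast hpd)).2
        (h.trans (hmin.2 ⟨p, hpS, hpd, rfl⟩))
    · have hγ : (γ : ℝ) ≤ p.1 := by exact_mod_cast hi p hpS
      have hd : (d : ℝ) ≤ p.2 := by exact_mod_cast not_lt.1 hpd
      nlinarith

end VertexSlopes

theorem add_mul_le_mul_iff_div_le {γ d δ l : ℝ} (hdδ : d < δ) :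
    γ + l * d ≤ l * δ ↔ γ / (δ - d) ≤ l := by
  rw [div_le_iff₀ (sub_pos.2 hdδ)]
  constructor <;> intro h <;> linarith

theorem div_le_iff_inv_mul_add_le {γ d δ l : ℝ} (hdδ : d < δ) (hl : 0 < l) :
    γ / (δ - d) ≤ l ↔ l⁻¹ * γ + d ≤ δ := by
  rw [div_le_iff₀ (sub_pos.2 hdδ), ← le_sub_iff_add_le, inv_mul_le_iff₀ hl]

theorem stmt10_general
    (S : Set (ℕ × ℕ)) (γ d δ : ℕ)
    (hdδ : d ≤ δ) (hγδ : 0 < γ → d < δ)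
    (hi : ∀ p ∈ S, γ ≤ p.1)
    (hij : ∀ p ∈ S, p.1 = γ → d ≤ p.2)
    (l2 : ℝ)
    (hmin : IsLeast {x : ℝ | ∃ p ∈ S, p.2 < d ∧ x = ((p.1 : ℝ) - γ) / ((d : ℝ) - p.2)} l2)
    (I : Set ℝ)
    (hI : I = {l : ℝ | 0 < l ∧ (∀ p ∈ S, (γ : ℝ) + l * d ≤ (p.1 : ℝ) + l * p.2) ∧
      (γ : ℝ) + l * d ≤ l * δ}) :
    (0 < γ → I = Set.Icc ((γ : ℝ) / ((δ : ℝ) - d)) l2 ∧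
      (I.Nonempty ↔ l2⁻¹ * γ + d ≤ (δ : ℝ))) ∧
    (γ = 0 → I = Set.Ioc 0 l2) := by
  have hl2 : 0 < l2 := pos_of_isLeast_vertexSlopes hi hij hmin
  have hsupp l (hl : 0 < l) := forall_add_mul_le_iff_le_of_isLeast hi hmin hl.le
  constructor
  · intro hγ
    have hdδ' : (d : ℝ) < δ := by exact_mod_cast hγδ hγ
    have hlow : 0 < (γ : ℝ) / (δ - d) := div_pos (by exact_mod_cast hγ) (sub_pos.2 hdδ')
    have hIcc : I = Set.Icc ((γ : ℝ) / (δ - d)) l2 := by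
      ext l
      rw [hI, Set.mem_ofPred_eq, Set.mem_Icc, add_mul_le_mul_iff_div_le hdδ']
      constructor
      · rintro ⟨hl, hS, hδl⟩
        exact ⟨hδl, (hsupp l hl).1 hS⟩
      · rintro ⟨hδl, hl2l⟩
        have hl := hlow.trans_le hδl
        exact ⟨hl, (hsupp l hl).2 hl2l, hδl⟩
    rw [hIcc, Set.nonempty_Icc, div_le_iff_inv_mul_add_le hdδ' hl2]
    exact ⟨rfl, Iff.rfl⟩
  · rintro rfl
    have hdδ' : (d : ℝ) ≤ δ := by exact_mod_cast hdδ
    ext l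
    rw [hI, Set.mem_ofPred_eq, Set.mem_Ioc, Nat.cast_zero, zero_add]
    constructor
    · rintro ⟨hl, hS, -⟩
      exact ⟨hl, (hsupp l hl).1 (by simpa using hS)⟩
    · rintro ⟨hl, hl2l⟩
      exact ⟨hl, by simpa using (hsupp l hl).2 hl2l, by gcongr⟩

/-- In Case 3 with (γ,d) = (n₁,m₁) the first vertex of the Newton polygon
and l₂ = (n₂-n₁)/(m₁-m₂) the minimum of (i-γ)/(d-j) over support points with j < d, the
set I_f = {l > 0 : γ + ld ≤ i + lj and γ + ld ≤ lδ for all (i,j) with b_{ij} ≠ 0}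
satisfies: if γ > 0 then I_f = [γ/(δ-d), l₂] (nonempty iff T₁ = l₂⁻¹γ + d ≤ δ),
and if γ = 0 then I_f = (0, l₂]. -/
theorem stmt10
    (S : Set (ℕ × ℕ)) (γ d δ n2 m2 : ℕ) (hδ : 2 ≤ δ) (hd : 1 ≤ d) (hγd : 2 ≤ γ + d)
    (hdδ : d ≤ δ) (hγδ : 0 < γ → d < δ)
    (hn : γ < n2) (hm : m2 < d)
    (hi : ∀ p ∈ S, γ ≤ p.1)
    (hij : ∀ p ∈ S, p.1 = γ → d ≤ p.2)
    (l2 : ℝ) (hl2 : l2 = ((n2 : ℝ) - γ) / ((d : ℝ) - m2))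
    (hmin : IsLeast {x : ℝ | ∃ p ∈ S, p.2 < d ∧ x = ((p.1 : ℝ) - γ) / ((d : ℝ) - p.2)} l2)
    (I : Set ℝ)
    (hI : I = {l : ℝ | 0 < l ∧ (∀ p ∈ S, (γ : ℝ) + l * d ≤ (p.1 : ℝ) + l * p.2) ∧
      (γ : ℝ) + l * d ≤ l * δ}) :
    (0 < γ → I = Set.Icc ((γ : ℝ) / ((δ : ℝ) - d)) l2 ∧
      (I.Nonempty ↔ l2⁻¹ * γ + d ≤ (δ : ℝ))) ∧
    (γ = 0 → I = Set.Ioc 0 l2) :=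
  stmt10_general S γ d δ hdδ hγδ hi hij l2 hmin I hI
end

section
/- Let F(Z,W) = (P(Z), Q(Z,W)) and F_0(Z,W) = (δZ, γZ + dW) with δ ≥ 2, d ≥ 2, γ ≥ 0, and suppose ‖F - F_0‖ < ε̃ (sup norm of components) on an F-invariant set V. Define Φ_n = F_0^{-n} ∘ F^n on V. Then for all n ≥ 0, |Φ_{n+1}^1 - Φ_n^1| < ε̃/δ^{n+1} and |Φ_{n+1}^2 - Φ_n^2| < ε̃/d^{n+1} + γ_{n+1} ε̃/(δ^{n+1} d^{n+1}) on V, where γ_n = Σ_{j=1}^n δ^{n-j} d^{j-1} γ. Consequently Φ_n converges uniformly on V. -/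
/-
Conjugating by `F₀ⁿ` turns the increments of `Φₙ` into images of the error `F - F₀` under a
single linear map: `F₀^{-(n+1)}` is linear and `F₀^{-(n+1)} ∘ F₀ = F₀^{-n}`, so
`Φₙ₊₁ - Φₙ = F₀^{-(n+1)} ∘ (F - F₀) ∘ Fⁿ`, and `Fⁿ` stays in `V`. Reading off the entries of
`F₀^{-(n+1)}` gives the two bounds. Since `γₙ₊₁ ≤ (n+1) γ δⁿ⁺¹ dⁿ⁺¹ / 2ⁿ⁺²`, the bounds are
summable, and the telescoping series `Φ₀ + Σ (Φₙ₊₁ - Φₙ)` converges uniformly on `V` by the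
Weierstrass M-test.
-/

open Filter Finset

theorem exists_tendstoUniformlyOn_of_norm_sub_le_summable {α E : Type*}
    [NormedAddCommGroup E] [CompleteSpace E] {f : ℕ → α → E} {u : ℕ → ℝ} {s : Set α}
    (hu : Summable u) (hf : ∀ n, ∀ x ∈ s, ‖f (n + 1) x - f n x‖ ≤ u n) :
    ∃ g : α → E, TendstoUniformlyOn f g atTop s := by
  have hsum := tendstoUniformlyOn_tsum_nat hu (f := fun n x => f (n + 1) x - f n x) hf
  refine ⟨fun x => f 0 x + ∑' n, (f (n + 1) x - f n x), ?_⟩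
  rw [Metric.tendstoUniformlyOn_iff] at hsum ⊢
  intro r hr
  filter_upwards [hsum r hr] with N hN x hx
  convert hN x hx using 1
  rw [dist_eq_norm, dist_eq_norm, Finset.sum_range_sub (fun n => f n x)]
  congr 1; abel

theorem summable_div_pow_succ {a : ℝ} (ha : 1 < a) (c : ℝ) :
    Summable fun n : ℕ => c / a ^ (n + 1) := by
  refine ((summable_geometric_of_lt_one (by positivity) (inv_lt_one_of_one_lt₀ ha)).mul_left
    (c / a)).congr fun n => ?_
  rw [pow_succ, inv_pow]
  field_simp

theorem sum_range_succ_pow_mul_pow_mul {R : Type*} [CommSemiring R] (δ d γ : R) (n : ℕ) :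
    ∑ j ∈ range (n + 1), δ ^ (n - j) * d ^ j * γ =
      γ * δ ^ n + d * ∑ j ∈ range n, δ ^ (n - 1 - j) * d ^ j * γ := by
  rw [sum_range_succ', Finset.mul_sum, add_comm]
  congr 1
  · simp [mul_comm]
  · refine sum_congr rfl fun j _ => ?_
    rw [show n - (j + 1) = n - 1 - j by omega, pow_succ]
    ring

theorem pow_mul_pow_mul_two_pow_le {δ d j n : ℕ} (hδ : 2 ≤ δ) (hd : 2 ≤ d) (hj : j ≤ n) :
    δ ^ (n - j) * d ^ j * 2 ^ (n + 2) ≤ δ ^ (n + 1) * d ^ (n + 1) :=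
  calc δ ^ (n - j) * d ^ j * 2 ^ (n + 2)
      = (δ ^ (n - j) * 2 ^ (j + 1)) * (d ^ j * 2 ^ (n + 1 - j)) := by
        rw [show n + 2 = (j + 1) + (n + 1 - j) by omega, pow_add]; ring
    _ ≤ (δ ^ (n - j) * δ ^ (j + 1)) * (d ^ j * d ^ (n + 1 - j)) := by gcongr
    _ = δ ^ (n + 1) * d ^ (n + 1) := by
        rw [← pow_add, ← pow_add, show n - j + (j + 1) = n + 1 by omega,
          show j + (n + 1 - j) = n + 1 by omega]

theorem sum_pow_mul_pow_mul_two_pow_le {δ d : ℕ} (hδ : 2 ≤ δ) (hd : 2 ≤ d) (γ n : ℕ) :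
    (∑ j ∈ range (n + 1), δ ^ (n - j) * d ^ j * γ) * 2 ^ (n + 2) ≤
      (n + 1) * (δ ^ (n + 1) * d ^ (n + 1) * γ) := by
  rw [sum_mul]
  calc ∑ j ∈ range (n + 1), δ ^ (n - j) * d ^ j * γ * 2 ^ (n + 2)
      ≤ ∑ _j ∈ range (n + 1), δ ^ (n + 1) * d ^ (n + 1) * γ := by
        refine sum_le_sum fun j hj => ?_
        rw [mul_right_comm]
        exact Nat.mul_le_mul_right γ
          (pow_mul_pow_mul_two_pow_le hδ hd (Nat.lt_succ_iff.mp (mem_range.mp hj)))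
    _ = (n + 1) * (δ ^ (n + 1) * d ^ (n + 1) * γ) := by simp

theorem summable_sum_pow_mul_pow_div {δ d : ℕ} (hδ : 2 ≤ δ) (hd : 2 ≤ d) (γ : ℕ) :
    Summable fun n : ℕ => ((∑ j ∈ range (n + 1), δ ^ (n - j) * d ^ j * γ : ℕ) : ℝ) /
      ((δ : ℝ) ^ (n + 1) * (d : ℝ) ^ (n + 1)) := by
  have hgeom : Summable fun n : ℕ => ((n + 1 : ℕ) : ℝ) * (1 / 2 : ℝ) ^ (n + 1) :=
    (summable_nat_add_iff (f := fun n : ℕ => (n : ℝ) * (1 / 2 : ℝ) ^ n) 1).mpr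
      (by simpa using summable_pow_mul_geometric_of_norm_lt_one 1 (r := (1 / 2 : ℝ)) (by norm_num))
  refine .of_nonneg_of_le (fun n => by positivity) (fun n => ?_) (hgeom.mul_left ((γ : ℝ) / 2))
  set S := ∑ j ∈ range (n + 1), δ ^ (n - j) * d ^ j * γ
  have hS : (S : ℝ) * 2 ^ (n + 2) ≤ (n + 1) * (δ ^ (n + 1) * d ^ (n + 1) * γ) := by
    exact_mod_cast sum_pow_mul_pow_mul_two_pow_le hδ hd γ n
  have hδ0 : (0 : ℝ) < δ := by exact_mod_cast (by omega : 0 < δ)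
  have hd0 : (0 : ℝ) < d := by exact_mod_cast (by omega : 0 < d)
  rw [div_le_iff₀ (by positivity)]
  calc (S : ℝ) = S * 2 ^ (n + 2) * (1 / 2) ^ (n + 2) := by rw [mul_assoc, ← mul_pow]; norm_num
    _ ≤ (n + 1) * (δ ^ (n + 1) * d ^ (n + 1) * γ) * (1 / 2) ^ (n + 2) := by gcongr
    _ = _ := by push_cast; ring

section AffineModel

variable {K : Type*}

def affineModel [Field K] (δ d γ : K) (p : K × K) : K × K :=
  (δ * p.1, γ * p.1 + d * p.2)

/-- With `g = γₙ` this is `F₀⁻ⁿ`: see `affineModelInvIter_succ_affineModel`, which is the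
recursion `γₙ₊₁ = γ δⁿ + d γₙ`. -/
def affineModelInvIter [Field K] (δ d g : K) (n : ℕ) (p : K × K) : K × K :=
  (p.1 / δ ^ n, p.2 / d ^ n - g * p.1 / (δ ^ n * d ^ n))

theorem affineModelInvIter_sub [Field K] (δ d g : K) (n : ℕ) (p q : K × K) :
    affineModelInvIter δ d g n (p - q) =
      affineModelInvIter δ d g n p - affineModelInvIter δ d g n q := by
  ext <;> simp only [affineModelInvIter, Prod.fst_sub, Prod.snd_sub] <;> ring

theorem affineModelInvIter_succ_affineModel [Field K] {δ d : K} (hδ : δ ≠ 0) (hd : d ≠ 0)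
    (γ g : K) (n : ℕ) (p : K × K) :
    affineModelInvIter δ d (γ * δ ^ n + d * g) (n + 1) (affineModel δ d γ p) =
      affineModelInvIter δ d g n p := by
  ext <;> simp only [affineModelInvIter, affineModel] <;> field_simp <;> ring

theorem affineModelInvIter_succ_sub [Field K] {δ d : K} (hδ : δ ≠ 0) (hd : d ≠ 0)
    (γ g : K) (n : ℕ) (F : K × K → K × K) (p : K × K) :
    affineModelInvIter δ d (γ * δ ^ n + d * g) (n + 1) (F p) - affineModelInvIter δ d g n p =
      affineModelInvIter δ d (γ * δ ^ n + d * g) (n + 1) (F p - affineModel δ d γ p) := by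
  rw [affineModelInvIter_sub, affineModelInvIter_succ_affineModel hδ hd]

theorem norm_affineModelInvIter_lt [NormedField K] {δ d : K} (hδ : δ ≠ 0) (hd : d ≠ 0)
    (g : K) (n : ℕ) {p : K × K} {ε : ℝ} (h₁ : ‖p.1‖ < ε) (h₂ : ‖p.2‖ < ε) :
    ‖(affineModelInvIter δ d g n p).1‖ < ε / ‖δ‖ ^ n ∧
      ‖(affineModelInvIter δ d g n p).2‖ < ε / ‖d‖ ^ n + ‖g‖ * ε / (‖δ‖ ^ n * ‖d‖ ^ n) := by
  have hδn : 0 < ‖δ‖ ^ n := by positivity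
  have hdn : 0 < ‖d‖ ^ n := by positivity
  refine ⟨?_, ?_⟩
  · simp only [affineModelInvIter, norm_div, norm_pow]
    gcongr
  · calc ‖(affineModelInvIter δ d g n p).2‖
        ≤ ‖p.2‖ / ‖d‖ ^ n + ‖g‖ * ‖p.1‖ / (‖δ‖ ^ n * ‖d‖ ^ n) := by
          simpa only [affineModelInvIter, norm_div, norm_mul, norm_pow] using
            norm_sub_le (p.2 / d ^ n) (g * p.1 / (δ ^ n * d ^ n))
      _ < ε / ‖d‖ ^ n + ‖g‖ * ε / (‖δ‖ ^ n * ‖d‖ ^ n) := by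
          refine add_lt_add_of_lt_of_le (by gcongr) ?_
          gcongr

end AffineModel

theorem stmt11_general
    (δ d γ : ℕ) (hδ : 2 ≤ δ) (hd : 2 ≤ d)
    (ε : ℝ)
    (F : ℂ × ℂ → ℂ × ℂ) (V : Set (ℂ × ℂ))
    (hinv : Set.MapsTo F V V)
    (hclose : ∀ x ∈ V, ‖(F x).1 - (δ : ℂ) * x.1‖ < ε ∧
      ‖(F x).2 - ((γ : ℂ) * x.1 + (d : ℂ) * x.2)‖ < ε)
    (gam : ℕ → ℕ) (hgam : ∀ n, gam n = ∑ j ∈ Finset.range n, δ ^ (n - 1 - j) * d ^ j * γ)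
    (Φ : ℕ → ℂ × ℂ → ℂ × ℂ)
    (hΦ : ∀ n x, Φ n x = ((F^[n] x).1 / (δ : ℂ) ^ n,
      (F^[n] x).2 / (d : ℂ) ^ n - (gam n : ℂ) * (F^[n] x).1 / ((δ : ℂ) ^ n * (d : ℂ) ^ n))) :
    (∀ n : ℕ, ∀ x ∈ V,
      ‖(Φ (n + 1) x).1 - (Φ n x).1‖ < ε / (δ : ℝ) ^ (n + 1) ∧
      ‖(Φ (n + 1) x).2 - (Φ n x).2‖ <
        ε / (d : ℝ) ^ (n + 1) + (gam (n + 1) : ℝ) * ε / ((δ : ℝ) ^ (n + 1) * (d : ℝ) ^ (n + 1)))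
    ∧ ∃ Φlim : ℂ × ℂ → ℂ × ℂ, TendstoUniformlyOn Φ Φlim Filter.atTop V := by
  have hδ0 : (δ : ℂ) ≠ 0 := Nat.cast_ne_zero.mpr (by omega)
  have hd0 : (d : ℂ) ≠ 0 := Nat.cast_ne_zero.mpr (by omega)
  have hgam_succ : ∀ n, gam (n + 1) = ∑ j ∈ range (n + 1), δ ^ (n - j) * d ^ j * γ := fun n => by
    rw [hgam, Nat.add_sub_cancel]
  have hgam_rec : ∀ n, (gam (n + 1) : ℂ) = γ * δ ^ n + d * gam n := fun n => by
    rw [hgam_succ, sum_range_succ_pow_mul_pow_mul, ← hgam]; push_cast; rfl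
  have hstep : ∀ n x, Φ (n + 1) x - Φ n x = affineModelInvIter (δ : ℂ) d (gam (n + 1)) (n + 1)
      (F (F^[n] x) - affineModel (δ : ℂ) d γ (F^[n] x)) := fun n x => by
    rw [hΦ, hΦ, Function.iterate_succ_apply', hgam_rec]
    exact affineModelInvIter_succ_sub hδ0 hd0 _ _ n F _
  refine (fun hbound => ⟨hbound, exists_tendstoUniformlyOn_of_norm_sub_le_summable ?_
    fun n x hx => (max_le_add_of_nonneg (norm_nonneg _) (norm_nonneg _)).trans
      (add_le_add (hbound n x hx).1.le (hbound n x hx).2.le)⟩) fun n x hx => ?_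
  · obtain ⟨h₁, h₂⟩ := hclose _ (hinv.iterate n hx)
    rw [← Prod.fst_sub, ← Prod.snd_sub, hstep]
    simpa using norm_affineModelInvIter_lt hδ0 hd0 (gam (n + 1) : ℂ) (n + 1) h₁ h₂
  · refine (summable_div_pow_succ (by exact_mod_cast (by omega : 1 < δ)) ε).add
      ((summable_div_pow_succ (by exact_mod_cast (by omega : 1 < d)) ε).add ?_)
    simp only [hgam_succ]
    exact ((summable_sum_pow_mul_pow_div hδ hd γ).mul_right ε).congr fun n => by ring

/-- let F be a map on an F-invariant set V with
‖F - F₀‖ < ε̃ on V, where F₀(Z,W) = (δZ, γZ + dW), δ ≥ 2, d ≥ 2, γ ≥ 0, and let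
Φₙ = F₀⁻ⁿ ∘ Fⁿ, explicitly Φₙ(Z,W) = (Pₙ/δⁿ, Qₙ/dⁿ - γₙPₙ/(δⁿdⁿ)) with
γₙ = Σ_{j=1}^n δ^{n-j} d^{j-1} γ. Then on V, for all n,
|Φ¹_{n+1} - Φ¹ₙ| < ε̃/δ^{n+1} and |Φ²_{n+1} - Φ²ₙ| < ε̃/d^{n+1} + γ_{n+1}ε̃/(δ^{n+1}d^{n+1});
consequently Φₙ converges uniformly on V. -/
theorem stmt11
    (δ d γ : ℕ) (hδ : 2 ≤ δ) (hd : 2 ≤ d)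
    (ε : ℝ) (hε : 0 < ε)
    (F : ℂ × ℂ → ℂ × ℂ) (V : Set (ℂ × ℂ))
    (hinv : Set.MapsTo F V V)
    (hclose : ∀ x ∈ V, ‖(F x).1 - (δ : ℂ) * x.1‖ < ε ∧
      ‖(F x).2 - ((γ : ℂ) * x.1 + (d : ℂ) * x.2)‖ < ε)
    (gam : ℕ → ℕ) (hgam : ∀ n, gam n = ∑ j ∈ Finset.range n, δ ^ (n - 1 - j) * d ^ j * γ)
    (Φ : ℕ → ℂ × ℂ → ℂ × ℂ)
    (hΦ : ∀ n x, Φ n x = ((F^[n] x).1 / (δ : ℂ) ^ n,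
      (F^[n] x).2 / (d : ℂ) ^ n - (gam n : ℂ) * (F^[n] x).1 / ((δ : ℂ) ^ n * (d : ℂ) ^ n))) :
    (∀ n : ℕ, ∀ x ∈ V,
      ‖(Φ (n + 1) x).1 - (Φ n x).1‖ < ε / (δ : ℝ) ^ (n + 1) ∧
      ‖(Φ (n + 1) x).2 - (Φ n x).2‖ <
        ε / (d : ℝ) ^ (n + 1) + (gam (n + 1) : ℝ) * ε / ((δ : ℝ) ^ (n + 1) * (d : ℝ) ^ (n + 1)))
    ∧ ∃ Φlim : ℂ × ℂ → ℂ × ℂ, TendstoUniformlyOn Φ Φlim Filter.atTop V :=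
  stmt11_general δ d γ hδ hd ε F V hinv hclose gam hgam Φ hΦ
end

section
/- With notation as in the previous convergence result and δ ≠ d, the limit Φ = lim Φ_n satisfies ‖Φ - id‖ < max{ 1/(δ-1), 1/(d-1) + (γ/(δ-d))(1/(d-1) - 1/(δ-1)) } · ε̃ on V; if δ = d, then ‖Φ - id‖ < (1/(d-1) + γ/(d-1)^2) · ε̃. -/
/-!
With `yₖ = Fᵏ x ∈ V`, the increments telescope: `Φₖ₊₁ x - Φₖ x = F₀^{-(k+1)} (F yₖ - F₀ yₖ)`,
because `F₀^{-(k+1)} ∘ F₀ = F₀^{-k}` and `F₀^{-(k+1)}` is linear. Its first coordinate is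
smaller than `ε / δᵏ⁺¹` and its second than `ε (1 / dᵏ⁺¹ + γₖ₊₁ / (δd)ᵏ⁺¹)`. Summing over `k`,
the first gives `ε / (δ - 1)`; in the second, `∑ γₖ₊₁ / (δd)ᵏ⁺¹` is `γ` times the Cauchy product
of `∑ δ^{-(k+1)}` and `∑ d^{-(k+1)}`, so the total is `ε (1 / (d - 1) + γ / ((δ - 1)(d - 1)))`.
The bounds stay strict in the limit because the first increment is already strictly smaller
than its bound. Finally `γ / ((δ - 1)(d - 1))` equals `γ / (δ - d) · (1 / (d - 1) - 1 / (δ - 1))`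
for `δ ≠ d` and `γ / (d - 1)²` for `δ = d`.
-/

open Filter Topology Finset

theorem dist_lt_tsum_of_dist_lt_of_tendsto {α : Type*} [PseudoMetricSpace α] {f : ℕ → α}
    {a : α} (c : ℕ → ℝ) (hf : ∀ n, dist (f n) (f (n + 1)) < c n) (hc : Summable c)
    (ha : Tendsto f atTop (𝓝 a)) : dist (f 0) a < ∑' n, c n := by
  have htail : dist (f 1) a ≤ ∑' n, c (n + 1) := by
    simpa only [add_comm 1] using dist_le_tsum_of_dist_le_of_tendsto c (fun n => (hf n).le) hc ha 1
  calc dist (f 0) a ≤ dist (f 0) (f 1) + dist (f 1) a := dist_triangle _ _ _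
    _ < c 0 + ∑' n, c (n + 1) := add_lt_add_of_lt_of_le (hf 0) htail
    _ = ∑' n, c n := hc.tsum_eq_zero_add.symm

theorem hasSum_inv_pow_succ {p : ℝ} (hp : 1 < p) :
    HasSum (fun n : ℕ => (p⁻¹) ^ (n + 1)) (p - 1)⁻¹ := by
  have hgeom := (hasSum_geometric_of_lt_one (inv_nonneg.2 (zero_le_one.trans hp.le))
    (inv_lt_one_of_one_lt₀ hp)).mul_left p⁻¹
  have hsum : p⁻¹ * (1 - p⁻¹)⁻¹ = (p - 1)⁻¹ := by
    have : p ≠ 0 := by positivity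
    have : p - 1 ≠ 0 := sub_ne_zero.2 hp.ne'
    field_simp
  rw [hsum] at hgeom
  exact hgeom.congr_fun fun n => pow_succ' _ _

theorem hasSum_sum_pow_mul_pow_div {p q : ℝ} (hp : 1 < p) (hq : 1 < q) :
    HasSum (fun n : ℕ => (∑ j ∈ range (n + 1), p ^ (n - j) * q ^ j) / (p ^ (n + 1) * q ^ (n + 1)))
      ((p - 1)⁻¹ * (q - 1)⁻¹) := by
  have hP := hasSum_inv_pow_succ hp
  have hQ := hasSum_inv_pow_succ hq
  have hcauchy := hasSum_sum_range_mul_of_summable_norm hP.summable.norm hQ.summable.norm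
  rw [hP.tsum_eq, hQ.tsum_eq] at hcauchy
  refine hcauchy.congr_fun fun n => ?_
  rw [sum_div]
  refine sum_congr rfl fun j hj => ?_
  obtain ⟨i, rfl⟩ := Nat.exists_eq_add_of_le (Nat.lt_succ_iff.1 (mem_range.1 hj))
  have : p ≠ 0 := by positivity
  have : q ≠ 0 := by positivity
  rw [Nat.add_sub_cancel_left, inv_pow, inv_pow]
  field_simp
  ring

theorem gam_succ {δ d γ : ℕ} {gam : ℕ → ℕ}
    (hgam : ∀ n, gam n = ∑ j ∈ range n, δ ^ (n - 1 - j) * d ^ j * γ) (n : ℕ) :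
    gam (n + 1) = d * gam n + δ ^ n * γ := by
  rw [hgam, hgam, sum_range_succ', mul_sum]
  congr 1
  · refine sum_congr rfl fun j _ => ?_
    rw [show n + 1 - 1 - (j + 1) = n - 1 - j by omega]
    ring
  · simp

theorem div_pow_succ_sub_div_pow {K : Type*} [Field K] {δ : K} (hδ : δ ≠ 0) (a b : K) (n : ℕ) :
    a / δ ^ (n + 1) - b / δ ^ n = (a - δ * b) / δ ^ (n + 1) := by
  field_simp
  ring

-- `b₂ / dⁿ - g b₁ / (δⁿ dⁿ)` is the second coordinate of `F₀⁻ⁿ b` when `g = γₙ`, and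
-- `d g + δⁿ γ` is `γₙ₊₁`: this is `F₀^{-(n+1)} a - F₀⁻ⁿ b = F₀^{-(n+1)} (a - F₀ b)`.
theorem normalized_snd_succ_sub {K : Type*} [Field K] {δ d : K} (hδ : δ ≠ 0) (hd : d ≠ 0)
    (γ g a₁ a₂ b₁ b₂ : K) (n : ℕ) :
    (a₂ / d ^ (n + 1) - (d * g + δ ^ n * γ) * a₁ / (δ ^ (n + 1) * d ^ (n + 1)))
        - (b₂ / d ^ n - g * b₁ / (δ ^ n * d ^ n))
      = (a₂ - (γ * b₁ + d * b₂)) / d ^ (n + 1)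
        - (d * g + δ ^ n * γ) * (a₁ - δ * b₁) / (δ ^ (n + 1) * d ^ (n + 1)) := by
  field_simp
  ring

theorem dist_div_pow_lt_of_norm_sub_lt {δ : ℕ} (hδ : 0 < δ) {ε : ℝ} {a b : ℂ}
    (h : ‖a - δ * b‖ < ε) (n : ℕ) :
    dist (b / (δ : ℂ) ^ n) (a / (δ : ℂ) ^ (n + 1)) < ε * ((δ : ℝ)⁻¹) ^ (n + 1) := by
  rw [dist_comm, dist_eq_norm, div_pow_succ_sub_div_pow (Nat.cast_ne_zero.2 hδ.ne'), norm_div,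
    norm_pow, Complex.norm_natCast, inv_pow, ← div_eq_mul_inv]
  exact div_lt_div_of_pos_right h (by positivity)

theorem dist_normalized_snd_lt_of_norm_sub_lt {δ d γ g g' : ℕ} (hδ : 0 < δ) (hd : 0 < d)
    {n : ℕ} (hg' : g' = d * g + δ ^ n * γ) {ε : ℝ} {a b : ℂ × ℂ}
    (h₁ : ‖a.1 - δ * b.1‖ < ε) (h₂ : ‖a.2 - (γ * b.1 + d * b.2)‖ < ε) :
    dist (b.2 / (d : ℂ) ^ n - g * b.1 / ((δ : ℂ) ^ n * (d : ℂ) ^ n))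
        (a.2 / (d : ℂ) ^ (n + 1) - g' * a.1 / ((δ : ℂ) ^ (n + 1) * (d : ℂ) ^ (n + 1)))
      < ε * (((d : ℝ)⁻¹) ^ (n + 1) + g' / ((δ : ℝ) ^ (n + 1) * (d : ℝ) ^ (n + 1))) := by
  have hg'C : (g' : ℂ) = d * g + δ ^ n * γ := by rw [hg']; push_cast; ring
  rw [dist_comm, dist_eq_norm, hg'C, normalized_snd_succ_sub (Nat.cast_ne_zero.2 hδ.ne')
    (Nat.cast_ne_zero.2 hd.ne'), ← hg'C]
  calc _ ≤ ‖(a.2 - (γ * b.1 + d * b.2)) / (d : ℂ) ^ (n + 1)‖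
        + ‖g' * (a.1 - δ * b.1) / ((δ : ℂ) ^ (n + 1) * (d : ℂ) ^ (n + 1))‖ := norm_sub_le _ _
    _ = ‖a.2 - (γ * b.1 + d * b.2)‖ / (d : ℝ) ^ (n + 1)
        + g' * ‖a.1 - δ * b.1‖ / ((δ : ℝ) ^ (n + 1) * (d : ℝ) ^ (n + 1)) := by
      simp only [norm_div, norm_mul, norm_pow, Complex.norm_natCast]
    _ < ε / (d : ℝ) ^ (n + 1) + g' * ε / ((δ : ℝ) ^ (n + 1) * (d : ℝ) ^ (n + 1)) :=
      add_lt_add_of_lt_of_le (by gcongr) (by gcongr)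
    _ = _ := by rw [inv_pow]; ring

section

variable {δ d γ : ℕ} {ε : ℝ} {F : ℂ × ℂ → ℂ × ℂ} {V : Set (ℂ × ℂ)} {gam : ℕ → ℕ}
  {Φ : ℕ → ℂ × ℂ → ℂ × ℂ} {Φlim : ℂ × ℂ → ℂ × ℂ} {x : ℂ × ℂ}

theorem norm_fst_limit_sub_lt (hδ : 2 ≤ δ) (hinv : Set.MapsTo F V V)
    (hclose : ∀ y ∈ V, ‖(F y).1 - (δ : ℂ) * y.1‖ < ε)
    (hΦ : ∀ n y, (Φ n y).1 = (F^[n] y).1 / (δ : ℂ) ^ n)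
    (hlim : Tendsto (fun n => Φ n x) atTop (𝓝 (Φlim x))) (hx : x ∈ V) :
    ‖(Φlim x).1 - x.1‖ < ε * ((δ : ℝ) - 1)⁻¹ := by
  have hsum := (hasSum_inv_pow_succ (by exact_mod_cast hδ : (1 : ℝ) < δ)).mul_left ε
  have hdist := dist_lt_tsum_of_dist_lt_of_tendsto (f := fun n => (Φ n x).1) _
    (fun n => ?_) hsum.summable hlim.fst_nhds
  · rw [hsum.tsum_eq] at hdist
    simpa [hΦ 0, dist_eq_norm'] using hdist
  rw [hΦ, hΦ, Function.iterate_succ_apply']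
  exact dist_div_pow_lt_of_norm_sub_lt (by omega) (hclose _ (hinv.iterate n hx)) n

theorem norm_snd_limit_sub_lt (hδ : 2 ≤ δ) (hd : 2 ≤ d) (hinv : Set.MapsTo F V V)
    (hclose : ∀ y ∈ V, ‖(F y).1 - (δ : ℂ) * y.1‖ < ε ∧
      ‖(F y).2 - ((γ : ℂ) * y.1 + (d : ℂ) * y.2)‖ < ε)
    (hgam : ∀ n, gam n = ∑ j ∈ range n, δ ^ (n - 1 - j) * d ^ j * γ)
    (hΦ : ∀ n y, (Φ n y).2 =
      (F^[n] y).2 / (d : ℂ) ^ n - (gam n : ℂ) * (F^[n] y).1 / ((δ : ℂ) ^ n * (d : ℂ) ^ n))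
    (hlim : Tendsto (fun n => Φ n x) atTop (𝓝 (Φlim x))) (hx : x ∈ V) :
    ‖(Φlim x).2 - x.2‖ < ε * (((d : ℝ) - 1)⁻¹ + γ * (((δ : ℝ) - 1)⁻¹ * ((d : ℝ) - 1)⁻¹)) := by
  have hδ1 : (1 : ℝ) < δ := by exact_mod_cast hδ
  have hd1 : (1 : ℝ) < d := by exact_mod_cast hd
  have hgam_div : ∀ n, (gam (n + 1) : ℝ) / ((δ : ℝ) ^ (n + 1) * (d : ℝ) ^ (n + 1)) =
      γ * ((∑ j ∈ range (n + 1), (δ : ℝ) ^ (n - j) * (d : ℝ) ^ j) /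
        ((δ : ℝ) ^ (n + 1) * (d : ℝ) ^ (n + 1))) := fun n => by
    rw [hgam, Nat.add_sub_cancel]; push_cast; rw [← sum_mul]; ring
  have hsum : HasSum
      (fun n => ε * (((d : ℝ)⁻¹) ^ (n + 1) + gam (n + 1) / ((δ : ℝ) ^ (n + 1) * (d : ℝ) ^ (n + 1))))
      (ε * (((d : ℝ) - 1)⁻¹ + γ * (((δ : ℝ) - 1)⁻¹ * ((d : ℝ) - 1)⁻¹))) :=
    (((hasSum_inv_pow_succ hd1).add
        ((hasSum_sum_pow_mul_pow_div hδ1 hd1).mul_left (γ : ℝ))).mul_left ε).congr_fun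
      fun n => by rw [hgam_div]
  have hdist := dist_lt_tsum_of_dist_lt_of_tendsto (f := fun n => (Φ n x).2) _
    (fun n => ?_) hsum.summable hlim.snd_nhds
  · rw [hsum.tsum_eq] at hdist
    simpa [hΦ 0, hgam, dist_eq_norm'] using hdist
  rw [hΦ, hΦ, Function.iterate_succ_apply']
  obtain ⟨h₁, h₂⟩ := hclose _ (hinv.iterate n hx)
  exact dist_normalized_snd_lt_of_norm_sub_lt (by omega) (by omega) (gam_succ hgam n) h₁ h₂

end

/-- with the setup of the previous convergence result, the limit
Φ = lim Φₙ satisfies, on V: if δ ≠ d,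
‖Φ - id‖ < max{1/(δ-1), 1/(d-1) + (γ/(δ-d))(1/(d-1) - 1/(δ-1))}·ε̃, and if δ = d,
‖Φ - id‖ < (1/(d-1) + γ/(d-1)²)·ε̃. -/
theorem stmt12
    (δ d γ : ℕ) (hδ : 2 ≤ δ) (hd : 2 ≤ d)
    (ε : ℝ) (hε : 0 < ε)
    (F : ℂ × ℂ → ℂ × ℂ) (V : Set (ℂ × ℂ))
    (hinv : Set.MapsTo F V V)
    (hclose : ∀ x ∈ V, ‖(F x).1 - (δ : ℂ) * x.1‖ < ε ∧
      ‖(F x).2 - ((γ : ℂ) * x.1 + (d : ℂ) * x.2)‖ < ε)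
    (gam : ℕ → ℕ) (hgam : ∀ n, gam n = ∑ j ∈ Finset.range n, δ ^ (n - 1 - j) * d ^ j * γ)
    (Φ : ℕ → ℂ × ℂ → ℂ × ℂ)
    (hΦ : ∀ n x, Φ n x = ((F^[n] x).1 / (δ : ℂ) ^ n,
      (F^[n] x).2 / (d : ℂ) ^ n - (gam n : ℂ) * (F^[n] x).1 / ((δ : ℂ) ^ n * (d : ℂ) ^ n)))
    (Φlim : ℂ × ℂ → ℂ × ℂ)
    (hlim : ∀ x ∈ V, Filter.Tendsto (fun n => Φ n x) Filter.atTop (nhds (Φlim x))) :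
    (δ ≠ d → ∀ x ∈ V,
      max ‖(Φlim x).1 - x.1‖ ‖(Φlim x).2 - x.2‖ <
        max (1 / ((δ : ℝ) - 1))
          (1 / ((d : ℝ) - 1) + (γ : ℝ) / ((δ : ℝ) - (d : ℝ)) *
            (1 / ((d : ℝ) - 1) - 1 / ((δ : ℝ) - 1))) * ε) ∧
    (δ = d → ∀ x ∈ V,
      max ‖(Φlim x).1 - x.1‖ ‖(Φlim x).2 - x.2‖ <
        (1 / ((d : ℝ) - 1) + (γ : ℝ) / ((d : ℝ) - 1) ^ 2) * ε) := by
  have hδ2 : (2 : ℝ) ≤ δ := by exact_mod_cast hδ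
  have hd2 : (2 : ℝ) ≤ d := by exact_mod_cast hd
  have hδ1 : (δ : ℝ) - 1 ≠ 0 := by linarith
  have hd1 : (d : ℝ) - 1 ≠ 0 := by linarith
  have hbound : ∀ x ∈ V, max ‖(Φlim x).1 - x.1‖ ‖(Φlim x).2 - x.2‖ <
      max (1 / ((δ : ℝ) - 1)) (1 / ((d : ℝ) - 1) + γ / (((δ : ℝ) - 1) * ((d : ℝ) - 1))) * ε := by
    intro x hx
    rw [max_mul_of_nonneg _ _ hε.le]
    refine max_lt_max ?_ ?_
    · refine (norm_fst_limit_sub_lt hδ hinv (fun y hy => (hclose y hy).1)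
        (fun n y => by rw [hΦ]) (hlim x hx) hx).trans_eq ?_
      ring
    · refine (norm_snd_limit_sub_lt hδ hd hinv hclose hgam (fun n y => by rw [hΦ])
        (hlim x hx) hx).trans_eq ?_
      field_simp
  refine ⟨fun hne => ?_, fun heq => ?_⟩
  · have hδd : (δ : ℝ) - d ≠ 0 := sub_ne_zero.2 (by exact_mod_cast hne)
    have hcoeff : (γ : ℝ) / ((δ : ℝ) - d) * (1 / ((d : ℝ) - 1) - 1 / ((δ : ℝ) - 1)) =
        γ / (((δ : ℝ) - 1) * ((d : ℝ) - 1)) := by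
      field_simp
      ring
    rwa [hcoeff]
  · subst heq
    have hmax : max (1 / ((δ : ℝ) - 1)) (1 / ((δ : ℝ) - 1) + γ / (((δ : ℝ) - 1) * ((δ : ℝ) - 1)))
        = 1 / ((δ : ℝ) - 1) + γ / ((δ : ℝ) - 1) ^ 2 := by
      rw [max_eq_right (le_add_of_nonneg_right (div_nonneg γ.cast_nonneg (mul_self_nonneg _))), sq]
    rwa [← hmax]
end

section
/- Let P be holomorphic on H = {Z ∈ ℂ : Re Z < c} with |P(Z) - δZ| < ε̃ on H, where δ ≥ 2. Then P is injective on H' = {Z : Re Z < c - 2ε̃/δ}. -/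
open Metric

/-! Write `P Z = δ Z + g Z` with `‖g‖ < ε` on the half-plane `Re Z < c`. At distance
`r = 2ε/δ` from the boundary the Cauchy estimate gives `‖g'‖ ≤ ε / r = δ / 2`, so on the
convex half-plane `Re Z < c - r` the perturbation `g` is `δ/2`-Lipschitz and cannot
compensate the expansion by `δ`; hence `P` is injective there. -/

theorem Set.injOn_of_norm_sub_smul_sub_le {𝕜 E : Type*} [NormedField 𝕜]
    [NormedAddCommGroup E] [NormedSpace 𝕜 E] {f : E → E} {s : Set E} (a : 𝕜) {K : ℝ} (hK : K < ‖a‖)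
    (h : ∀ z ∈ s, ∀ w ∈ s, ‖(f z - a • z) - (f w - a • w)‖ ≤ K * ‖z - w‖) :
    Set.InjOn f s := by
  intro z hz w hw hfzw
  have hexpand : ‖a‖ * ‖z - w‖ ≤ K * ‖z - w‖ := by
    calc ‖a‖ * ‖z - w‖ = ‖(f z - a • z) - (f w - a • w)‖ := by
          rw [hfzw, ← norm_smul, ← norm_neg, smul_sub]; congr 1; abel
      _ ≤ K * ‖z - w‖ := h z hz w hw
  have hzw : ‖z - w‖ = 0 := by nlinarith [norm_nonneg (z - w)]
  exact sub_eq_zero.mp (norm_eq_zero.mp hzw)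

namespace Complex

theorem closedBall_subset_re_lt {z : ℂ} {r c : ℝ} (hz : z.re < c - r) :
    closedBall z r ⊆ {w : ℂ | w.re < c} := fun w hw => by
  have hre : w.re - z.re ≤ r :=
    calc w.re - z.re = (w - z).re := (sub_re w z).symm
      _ ≤ ‖w - z‖ := re_le_norm _
      _ ≤ r := mem_closedBall_iff_norm.mp hw
  show w.re < c
  linarith

variable {g : ℂ → ℂ} {c ε r : ℝ}

theorem norm_deriv_le_of_re_lt (hr : 0 < r) (hg : DifferentiableOn ℂ g {w : ℂ | w.re < c})
    (hbound : ∀ w : ℂ, w.re < c → ‖g w‖ ≤ ε) {z : ℂ} (hz : z.re < c - r) :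
    ‖deriv g z‖ ≤ ε / r := by
  have hball := closedBall_subset_re_lt hz
  have hdiff : DiffContOnCl ℂ g (ball z r) := by
    refine (hg.mono ?_).diffContOnCl
    rw [closure_ball z hr.ne']
    exact hball
  exact norm_deriv_le_of_forall_mem_sphere_norm_le hr hdiff
    fun w hw => hbound w (hball (sphere_subset_closedBall hw))

theorem norm_sub_le_of_re_lt (hr : 0 < r) (hg : DifferentiableOn ℂ g {w : ℂ | w.re < c})
    (hbound : ∀ w : ℂ, w.re < c → ‖g w‖ ≤ ε) {z w : ℂ} (hz : z.re < c - r)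
    (hw : w.re < c - r) : ‖g z - g w‖ ≤ ε / r * ‖z - w‖ := by
  have hopen : IsOpen {w : ℂ | w.re < c} := isOpen_lt continuous_re continuous_const
  refine (convex_halfSpace_re_lt (c - r)).norm_image_sub_le_of_norm_deriv_le
    (fun x hx => hg.differentiableAt (hopen.mem_nhds ?_))
    (fun x hx => norm_deriv_le_of_re_lt hr hg hbound hx) hw hz
  show x.re < c
  have : x.re < c - r := hx
  linarith

end Complex

/-- if P is holomorphic on H = {Re Z < c} with |P(Z) - δZ| < ε̃ on H,
where δ ≥ 2, then P is injective on H' = {Re Z < c - 2ε̃/δ}. -/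
theorem stmt13
    (δ : ℕ) (hδ : 2 ≤ δ) (ε c : ℝ) (hε : 0 < ε)
    (P : ℂ → ℂ)
    (hP : DifferentiableOn ℂ P {Z : ℂ | Z.re < c})
    (hclose : ∀ Z : ℂ, Z.re < c → ‖P Z - (δ : ℂ) * Z‖ < ε) :
    Set.InjOn P {Z : ℂ | Z.re < c - 2 * ε / δ} := by
  have hδ0 : (0 : ℝ) < δ := by positivity
  have hg : DifferentiableOn ℂ (fun Z => P Z - (δ : ℂ) * Z) {Z : ℂ | Z.re < c} :=
    hP.sub (differentiableOn_id.const_mul _)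
  have hLip := fun z w => Complex.norm_sub_le_of_re_lt (r := 2 * ε / δ) (z := z) (w := w)
    (by positivity) hg fun Z hZ => (hclose Z hZ).le
  refine Set.injOn_of_norm_sub_smul_sub_le (δ : ℂ) (K := δ / 2) ?_ fun z hz w hw => ?_
  · rw [Complex.norm_natCast]
    linarith
  · calc _ ≤ ε / (2 * ε / δ) * ‖z - w‖ := hLip z w hz hw
      _ = δ / 2 * ‖z - w‖ := by field_simp
end

section
/- Let f_0(z,w) = (z^δ, z^γ w^d) with δ ≥ 2, d ≥ 2, γ ≥ 0, γ + d ≥ 2. Let φ(z,w) = (φ₁(z), φ₂(z,w)) be a biholomorphic skew product on an open set U of the form {|z| < r, |w| < r|z|^{l}} (l ≥ 0 rational) that conjugates f_0 to itself and satisfies |φ₁(z)| ~ |z| and |φ₂(z,w)| ~ |w| as (z,w) → 0 in U. Then φ(z,w) = (c₁ z, c₂ w) with c₁^{δ-1} = 1 and c₁^{γ} c₂^{d-1} = 1. -/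
/-!
Write `Φ = (φ₁, φ₂)` and `pₙ = f₀ⁿ p = (zₙ, wₙ)`. Because `f₀` maps the tube `|w| < r|z|^l` into
itself, the relative height `|wₙ| / (r|zₙ|^l)` is at least raised to the power `d` at each step,
so the orbit enters every thinner tube `|w| < ρ|z|^l`, where `|Φ| ~ |id|` applies. Along the orbit
the conjugacy raises `|φ₁(zₙ)| / |zₙ|` to the power `δ`, and then `|φ₂(pₙ)| / |wₙ|` to the power
`d`; staying between `1/2` and `3/2` forces both ratios to be `1`. Hence `φ₁(z)/z` and `φ₂(z,w)/w`
are holomorphic of modulus one on the part of the tube where `zw ≠ 0`, which is connected (the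
image of a convex set under `exp × exp`), so they are constant by the maximum modulus principle;
continuity extends `Φ = (c₁ z, c₂ w)` to the whole tube, and `Φ ∘ f₀ = f₀ ∘ Φ` then gives the
relations between `c₁` and `c₂`.
-/

open Filter Set Topology

theorem eq_one_of_eventually_pow_pow_mem_Icc {q a b : ℝ} {e : ℕ} (hq : 0 ≤ q) (he : 1 < e)
    (ha : 0 < a) (h : ∀ᶠ n in atTop, q ^ e ^ n ∈ Icc a b) : q = 1 := by
  have hexp : Tendsto (fun n : ℕ => e ^ n) atTop atTop := tendsto_pow_atTop_atTop_of_one_lt he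
  rcases lt_trichotomy q 1 with hlt | heq | hgt
  · have hsmall := ((tendsto_pow_atTop_nhds_zero_of_lt_one hq hlt).comp hexp).eventually
      (gt_mem_nhds ha)
    obtain ⟨n, hn, hIcc⟩ := (hsmall.and h).exists
    exact absurd hIcc.1 (not_le.2 hn)
  · exact heq
  · have hlarge := ((tendsto_pow_atTop_atTop_of_one_lt hgt).comp hexp).eventually_gt_atTop b
    obtain ⟨n, hn, hIcc⟩ := (hlarge.and h).exists
    exact absurd hIcc.2 (not_le.2 hn)

theorem eq_of_div_succ_eq_pow_of_eventually_bounded {x y : ℕ → ℝ} {a b : ℝ} {e : ℕ}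
    (he : 1 < e) (ha : 0 < a) (hx : ∀ n, 0 < x n) (hy : 0 ≤ y 0)
    (hrec : ∀ n, y (n + 1) / x (n + 1) = (y n / x n) ^ e)
    (hb : ∀ᶠ n in atTop, a * x n ≤ y n ∧ y n ≤ b * x n) : y 0 = x 0 := by
  have hpow : ∀ n, y n / x n = (y 0 / x 0) ^ e ^ n := by
    intro n
    induction n with
    | zero => simp
    | succ n ih => rw [hrec, ih, ← pow_mul, pow_succ]
  refine (div_eq_one_iff_eq (hx 0).ne').1 <|
    eq_one_of_eventually_pow_pow_mem_Icc (b := b) (div_nonneg hy (hx 0).le) he ha ?_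
  filter_upwards [hb] with n hn
  rw [← hpow, mem_Icc, le_div_iff₀ (hx n), div_le_iff₀ (hx n)]
  exact hn

theorem Complex.eqOn_of_isPreconnected_of_norm_eq {E F : Type*} [NormedAddCommGroup E]
    [NormedSpace ℂ E] [NormedAddCommGroup F] [NormedSpace ℂ F] [StrictConvexSpace ℝ F]
    {f : E → F} {s : Set E} {C : ℝ} {x₀ : E} (hs : IsPreconnected s)
    (ho : IsOpen s) (hd : DifferentiableOn ℂ f s) (hC : ∀ x ∈ s, ‖f x‖ = C) (hx₀ : x₀ ∈ s) :
    EqOn f (Function.const E (f x₀)) s :=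
  Complex.eqOn_of_isPreconnected_of_isMaxOn_norm hs ho hd hx₀ fun x hx => by
    simp only [mem_ofPred_eq, Function.comp_apply, hC x hx, hC x₀ hx₀, le_refl]

theorem mul_pow_pred_eq_one {M : Type*} [CommMonoidWithZero M] [IsCancelMulZero M] {b c x : M}
    {n : ℕ} (hn : n ≠ 0) (hc : c ≠ 0) (hx : x ≠ 0)
    (h : c * x = b * c ^ n * x) : b * c ^ (n - 1) = 1 := by
  have hcn : c = b * c ^ (n - 1) * c := by
    rw [mul_assoc, ← pow_succ, Nat.sub_add_cancel (Nat.one_le_iff_ne_zero.2 hn)]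
    exact mul_right_cancel₀ hx h
  exact (mul_eq_right₀ hc).1 hcn.symm

def tube (r l : ℝ) : Set (ℂ × ℂ) := {p | ‖p.1‖ < r ∧ ‖p.2‖ < r * ‖p.1‖ ^ l}

def monomialMap (δ γ d : ℕ) (p : ℂ × ℂ) : ℂ × ℂ := (p.1 ^ δ, p.1 ^ γ * p.2 ^ d)

noncomputable def tubeHeight (r l : ℝ) (p : ℂ × ℂ) : ℝ := ‖p.2‖ / (r * ‖p.1‖ ^ l)

def AsymptoticToIdOnTubes (l : ℝ) (Φ : ℂ × ℂ → ℂ × ℂ) : Prop :=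
  ∀ ε > 0, ∃ ρ > 0, ∀ p ∈ tube ρ l,
    (1 - ε) * ‖p.1‖ ≤ ‖(Φ p).1‖ ∧ ‖(Φ p).1‖ ≤ (1 + ε) * ‖p.1‖ ∧
    (1 - ε) * ‖p.2‖ ≤ ‖(Φ p).2‖ ∧ ‖(Φ p).2‖ ≤ (1 + ε) * ‖p.2‖

section Tube

variable {r l : ℝ} {δ γ d : ℕ}

theorem isOpen_tube (hl : 0 ≤ l) : IsOpen (tube r l) := by
  have := Real.continuous_rpow_const hl
  exact (isOpen_lt (by fun_prop) (by fun_prop)).and (isOpen_lt (by fun_prop) (by fun_prop))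

theorem tubeHeight_mem_Ico {p : ℂ × ℂ} (hp : p ∈ tube r l) : tubeHeight r l p ∈ Ico 0 1 := by
  have hpos : 0 < r * ‖p.1‖ ^ l := (norm_nonneg _).trans_lt hp.2
  exact ⟨div_nonneg (norm_nonneg _) hpos.le, (div_lt_one hpos).2 hp.2⟩

theorem mem_tube_iff_log (hr : 0 < r) {z w : ℂ} (hz : z ≠ 0) (hw : w ≠ 0) :
    (z, w) ∈ tube r l ↔
      Real.log ‖z‖ < Real.log r ∧ Real.log ‖w‖ < Real.log r + l * Real.log ‖z‖ := by
  have hz' : 0 < ‖z‖ := norm_pos_iff.2 hz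
  have hw' : 0 < ‖w‖ := norm_pos_iff.2 hw
  rw [tube, mem_ofPred_eq, ← Real.log_rpow hz', ← Real.log_mul hr.ne' (by positivity),
    Real.log_lt_log_iff hz' hr, Real.log_lt_log_iff hw' (by positivity)]

theorem tube_inter_eq_image_exp (hr : 0 < r) :
    tube r l ∩ ({0}ᶜ ×ˢ {0}ᶜ) = (fun q : ℂ × ℂ => (Complex.exp q.1, Complex.exp q.2)) ''
      {q | q.1.re < Real.log r ∧ q.2.re < Real.log r + l * q.1.re} := by
  ext ⟨z, w⟩
  constructor
  · rintro ⟨hmem, hz, hw⟩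
    refine ⟨(Complex.log z, Complex.log w), ?_, by simp [Complex.exp_log hz, Complex.exp_log hw]⟩
    simpa [Complex.log_re] using (mem_tube_iff_log hr hz hw).1 hmem
  · rintro ⟨q, hq, hqzw⟩
    rw [← hqzw]
    refine ⟨(mem_tube_iff_log hr (Complex.exp_ne_zero _) (Complex.exp_ne_zero _)).2 ?_,
      Complex.exp_ne_zero _, Complex.exp_ne_zero _⟩
    simpa [Complex.norm_exp] using hq

theorem isConnected_tube_inter (hr : 0 < r) : IsConnected (tube r l ∩ ({0}ᶜ ×ˢ {0}ᶜ)) := by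
  rw [tube_inter_eq_image_exp hr]
  have hexp : Continuous fun q : ℂ × ℂ => (Complex.exp q.1, Complex.exp q.2) := by fun_prop
  refine IsConnected.image ⟨⟨(((Real.log r - 1 : ℝ) : ℂ),
    ((Real.log r + l * (Real.log r - 1) - 1 : ℝ) : ℂ)), by simp⟩, Convex.isPreconnected ?_⟩ _
    hexp.continuousOn
  refine convex_iff_forall_pos.2 fun x ⟨hx₁, hx₂⟩ y ⟨hy₁, hy₂⟩ a b ha hb hab => ?_
  have hlog : Real.log r = a * Real.log r + b * Real.log r := by rw [← add_mul, hab, one_mul]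
  simp only [mem_ofPred_eq, Prod.fst_add, Prod.snd_add, Prod.smul_fst, Prod.smul_snd,
    Complex.add_re, Complex.smul_re, smul_eq_mul]
  constructor
  · nlinarith [mul_lt_mul_of_pos_left hx₁ ha, mul_lt_mul_of_pos_left hy₁ hb]
  · nlinarith [mul_lt_mul_of_pos_left hx₂ ha, mul_lt_mul_of_pos_left hy₂ hb]

theorem le_one_of_mapsTo_tube (hδ : 2 ≤ δ) (hr : 0 < r)
    (h : MapsTo (monomialMap δ γ d) (tube r l) (tube r l)) : r ≤ 1 := by
  by_contra! hr1
  set t := (1 + r) / 2 with ht_def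
  have ht : ‖(t : ℂ)‖ = t := by rw [Complex.norm_real, Real.norm_of_nonneg (by positivity)]
  have hmem : ((t : ℂ), (0 : ℂ)) ∈ tube r l := by
    refine ⟨by rw [ht]; linarith, ?_⟩
    rw [norm_zero, ht]
    positivity
  have himage := (h hmem).1
  simp only [monomialMap, norm_pow, ht] at himage
  have hpow : t ^ 2 ≤ t ^ δ := pow_le_pow_right₀ (by linarith) hδ
  nlinarith [sq_nonneg (1 - r)]

theorem tubeHeight_monomialMap_le (h : MapsTo (monomialMap δ γ d) (tube r l) (tube r l))
    {p : ℂ × ℂ} (hp : p ∈ tube r l) :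
    tubeHeight r l (monomialMap δ γ d p) ≤ tubeHeight r l p ^ d := by
  obtain ⟨z, w⟩ := p
  set R := r * ‖z‖ ^ l with hR_def
  set R' := r * (‖z‖ ^ δ) ^ l with hR'_def
  have hR : 0 < R := (norm_nonneg w).trans_lt hp.2
  have hR' : 0 < R' := by simpa [monomialMap] using (norm_nonneg _).trans_lt (h hp).2
  -- let the second coordinate run to the boundary of the slice `{z} × B(0, R)`
  have hslice : ‖z‖ ^ γ * R ^ d ≤ R' := by
    have hlt : ∀ t ∈ Ioo (0 : ℝ) 1, ‖z‖ ^ γ * (t * R) ^ d ≤ R' := by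
      intro t ht
      have hnorm : ‖((t * R : ℝ) : ℂ)‖ = t * R := by
        rw [Complex.norm_real, Real.norm_of_nonneg (by nlinarith [ht.1])]
      have hmem : (z, ((t * R : ℝ) : ℂ)) ∈ tube r l := ⟨hp.1, by rw [hnorm]; nlinarith [ht.2]⟩
      have himage := (h hmem).2
      simp only [monomialMap, norm_mul, norm_pow, hnorm] at himage
      exact himage.le
    have hlim : Tendsto (fun t : ℝ => ‖z‖ ^ γ * (t * R) ^ d) (𝓝[<] 1) (𝓝 (‖z‖ ^ γ * (1 * R) ^ d)) :=
      ((by fun_prop : Continuous fun t : ℝ => ‖z‖ ^ γ * (t * R) ^ d).tendsto 1).mono_left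
        nhdsWithin_le_nhds
    simpa using le_of_tendsto hlim (eventually_of_mem (Ioo_mem_nhdsLT one_pos) hlt)
  calc tubeHeight r l (monomialMap δ γ d (z, w))
      = ‖z‖ ^ γ * R ^ d * tubeHeight r l (z, w) ^ d / R' := by
        simp only [tubeHeight, monomialMap, norm_mul, norm_pow, div_pow, ← hR_def, ← hR'_def]
        field_simp
    _ ≤ R' * tubeHeight r l (z, w) ^ d / R' := by
        gcongr
        exact pow_nonneg (tubeHeight_mem_Ico hp).1 d
    _ = tubeHeight r l (z, w) ^ d := by field_simp

theorem iterate_monomialMap_fst (p : ℂ × ℂ) (n : ℕ) :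
    ((monomialMap δ γ d)^[n] p).1 = p.1 ^ δ ^ n := by
  induction n with
  | zero => simp
  | succ n ih => rw [Function.iterate_succ_apply', monomialMap, ih, ← pow_mul, pow_succ]

theorem iterate_monomialMap_snd_ne_zero {p : ℂ × ℂ} (h₁ : p.1 ≠ 0) (h₂ : p.2 ≠ 0) (n : ℕ) :
    ((monomialMap δ γ d)^[n] p).2 ≠ 0 := by
  induction n with
  | zero => simpa using h₂
  | succ n ih =>
    rw [Function.iterate_succ_apply', monomialMap, iterate_monomialMap_fst]
    exact mul_ne_zero (pow_ne_zero _ (pow_ne_zero _ h₁)) (pow_ne_zero _ ih)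

theorem eventually_iterate_monomialMap_mem_tube (hδ : 2 ≤ δ) (hd : 2 ≤ d)
    (h : MapsTo (monomialMap δ γ d) (tube r l) (tube r l)) {p : ℂ × ℂ} (hp : p ∈ tube r l)
    (hp₁ : p.1 ≠ 0) {ρ : ℝ} (hρ : 0 < ρ) :
    ∀ᶠ n in atTop, (monomialMap δ γ d)^[n] p ∈ tube ρ l := by
  set P := fun n => (monomialMap δ γ d)^[n] p
  have hr : 0 < r := (norm_nonneg _).trans_lt hp.1
  have hfst : Tendsto (fun n => ‖(P n).1‖) atTop (𝓝 0) := by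
    simp only [P, iterate_monomialMap_fst, norm_pow]
    exact (tendsto_pow_atTop_nhds_zero_of_lt_one (norm_nonneg _)
      (hp.1.trans_le (le_one_of_mapsTo_tube hδ hr h))).comp
      (tendsto_pow_atTop_atTop_of_one_lt (by omega))
  have hheight : ∀ n, tubeHeight r l (P n) ≤ tubeHeight r l p ^ d ^ n := by
    intro n
    induction n with
    | zero => simp [P]
    | succ n ih =>
      calc tubeHeight r l (P (n + 1)) ≤ tubeHeight r l (P n) ^ d := by
            rw [show P (n + 1) = monomialMap δ γ d (P n) from Function.iterate_succ_apply' ..]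
            exact tubeHeight_monomialMap_le h (h.iterate n hp)
        _ ≤ (tubeHeight r l p ^ d ^ n) ^ d :=
            pow_le_pow_left₀ (tubeHeight_mem_Ico (h.iterate n hp)).1 ih d
        _ = tubeHeight r l p ^ d ^ (n + 1) := by rw [← pow_mul, pow_succ]
  have hheight_lim : Tendsto (fun n => tubeHeight r l p ^ d ^ n) atTop (𝓝 0) :=
    (tendsto_pow_atTop_nhds_zero_of_lt_one (tubeHeight_mem_Ico hp).1
      (tubeHeight_mem_Ico hp).2).comp (tendsto_pow_atTop_atTop_of_one_lt (by omega))
  filter_upwards [hfst.eventually (gt_mem_nhds hρ),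
    hheight_lim.eventually (gt_mem_nhds (div_pos hρ hr))] with n hn₁ hn₂
  refine ⟨hn₁, ?_⟩
  have hpos : 0 < r * ‖(P n).1‖ ^ l := by
    have : 0 < ‖(P n).1‖ := by simp [P, iterate_monomialMap_fst, hp₁]
    positivity
  calc ‖(P n).2‖ = tubeHeight r l (P n) * (r * ‖(P n).1‖ ^ l) := (div_mul_cancel₀ _ hpos.ne').symm
    _ < ρ / r * (r * ‖(P n).1‖ ^ l) := by gcongr; exact (hheight n).trans_lt hn₂
    _ = ρ * ‖(P n).1‖ ^ l := by field_simp

end Tube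

section Conjugacy

variable {r l : ℝ} {δ γ d : ℕ} {Φ : ℂ × ℂ → ℂ × ℂ}

theorem norm_fst_eq_of_conj (hδ : 2 ≤ δ) (hd : 2 ≤ d)
    (hmaps : MapsTo (monomialMap δ γ d) (tube r l) (tube r l))
    (hconj : ∀ p ∈ tube r l, Φ (monomialMap δ γ d p) = monomialMap δ γ d (Φ p))
    (hasymp : AsymptoticToIdOnTubes l Φ)
    {p : ℂ × ℂ} (hp : p ∈ tube r l) (hp₁ : p.1 ≠ 0) : ‖(Φ p).1‖ = ‖p.1‖ := by
  obtain ⟨ρ, hρ, hΦ⟩ := hasymp (1 / 2) (by norm_num)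
  set P := fun n => (monomialMap δ γ d)^[n] p
  have hP : ∀ n, P (n + 1) = monomialMap δ γ d (P n) := fun n => Function.iterate_succ_apply' ..
  refine eq_of_div_succ_eq_pow_of_eventually_bounded (x := fun n => ‖(P n).1‖)
    (y := fun n => ‖(Φ (P n)).1‖) hδ (b := 1 + 1 / 2) (by norm_num : (0 : ℝ) < 1 - 1 / 2)
    (fun n => ?_) (norm_nonneg _) (fun n => ?_) ?_
  · simp [P, iterate_monomialMap_fst, hp₁]
  · rw [hP, hconj (P n) (hmaps.iterate n hp)]
    simp only [monomialMap, norm_pow, div_pow]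
  · filter_upwards [eventually_iterate_monomialMap_mem_tube hδ hd hmaps hp hp₁ hρ] with n hn
    exact ⟨(hΦ _ hn).1, (hΦ _ hn).2.1⟩

theorem norm_snd_eq_of_conj (hδ : 2 ≤ δ) (hd : 2 ≤ d)
    (hmaps : MapsTo (monomialMap δ γ d) (tube r l) (tube r l))
    (hconj : ∀ p ∈ tube r l, Φ (monomialMap δ γ d p) = monomialMap δ γ d (Φ p))
    (hasymp : AsymptoticToIdOnTubes l Φ)
    {p : ℂ × ℂ} (hp : p ∈ tube r l) (hp₁ : p.1 ≠ 0) (hp₂ : p.2 ≠ 0) : ‖(Φ p).2‖ = ‖p.2‖ := by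
  obtain ⟨ρ, hρ, hΦ⟩ := hasymp (1 / 2) (by norm_num)
  set P := fun n => (monomialMap δ γ d)^[n] p
  have hP : ∀ n, P (n + 1) = monomialMap δ γ d (P n) := fun n => Function.iterate_succ_apply' ..
  have hP₁ : ∀ n, (P n).1 ≠ 0 := fun n => by simp [P, iterate_monomialMap_fst, hp₁]
  refine eq_of_div_succ_eq_pow_of_eventually_bounded (x := fun n => ‖(P n).2‖)
    (y := fun n => ‖(Φ (P n)).2‖) hd (b := 1 + 1 / 2) (by norm_num : (0 : ℝ) < 1 - 1 / 2)
    (fun n => norm_pos_iff.2 (iterate_monomialMap_snd_ne_zero hp₁ hp₂ n)) (norm_nonneg _)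
    (fun n => ?_) ?_
  · have hn : P n ∈ tube r l := hmaps.iterate n hp
    rw [hP, hconj (P n) hn]
    simp only [monomialMap, norm_mul, norm_pow,
      norm_fst_eq_of_conj hδ hd hmaps hconj hasymp hn (hP₁ n)]
    rw [mul_div_mul_left _ _ (pow_ne_zero _ (norm_ne_zero_iff.2 (hP₁ n))), div_pow]
  · filter_upwards [eventually_iterate_monomialMap_mem_tube hδ hd hmaps hp hp₁ hρ] with n hn
    exact ⟨(hΦ _ hn).2.2.1, (hΦ _ hn).2.2.2⟩

theorem exists_norm_eq_one_and_eq_diag (hl : 0 ≤ l) (hr : 0 < r) (hδ : 2 ≤ δ) (hd : 2 ≤ d)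
    (hdiff : DifferentiableOn ℂ Φ (tube r l))
    (hmaps : MapsTo (monomialMap δ γ d) (tube r l) (tube r l))
    (hconj : ∀ p ∈ tube r l, Φ (monomialMap δ γ d p) = monomialMap δ γ d (Φ p))
    (hasymp : AsymptoticToIdOnTubes l Φ) :
    ∃ c₁ c₂ : ℂ, ‖c₁‖ = 1 ∧ ‖c₂‖ = 1 ∧ ∀ p ∈ tube r l, Φ p = (c₁ * p.1, c₂ * p.2) := by
  set V := tube r l ∩ ({0}ᶜ ×ˢ {0}ᶜ)
  have hVo : IsOpen V := (isOpen_tube hl).inter (isOpen_compl_singleton.prod isOpen_compl_singleton)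
  obtain ⟨⟨p₀, hp₀⟩, hVc⟩ := isConnected_tube_inter (l := l) hr
  have hdiffV : DifferentiableOn ℂ Φ V := hdiff.mono inter_subset_left
  have hnorm₁ : ∀ p ∈ V, ‖(Φ p).1 / p.1‖ = 1 := fun p hp => by
    rw [norm_div, norm_fst_eq_of_conj hδ hd hmaps hconj hasymp hp.1 hp.2.1,
      div_self (norm_ne_zero_iff.2 hp.2.1)]
  have hnorm₂ : ∀ p ∈ V, ‖(Φ p).2 / p.2‖ = 1 := fun p hp => by
    rw [norm_div, norm_snd_eq_of_conj hδ hd hmaps hconj hasymp hp.1 hp.2.1 hp.2.2,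
      div_self (norm_ne_zero_iff.2 hp.2.2)]
  have hdiff₁ : DifferentiableOn ℂ (fun p => (Φ p).1 / p.1) V := by
    simpa only [div_eq_mul_inv] using
      hdiffV.fst.fun_mul (differentiableOn_fst.fun_inv fun p hp => hp.2.1)
  have hdiff₂ : DifferentiableOn ℂ (fun p => (Φ p).2 / p.2) V := by
    simpa only [div_eq_mul_inv] using
      hdiffV.snd.fun_mul (differentiableOn_snd.fun_inv fun p hp => hp.2.2)
  have h₁ := Complex.eqOn_of_isPreconnected_of_norm_eq hVc hVo hdiff₁ hnorm₁ hp₀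
  have h₂ := Complex.eqOn_of_isPreconnected_of_norm_eq hVc hVo hdiff₂ hnorm₂ hp₀
  refine ⟨_, _, hnorm₁ p₀ hp₀, hnorm₂ p₀ hp₀, ?_⟩
  have hV : EqOn Φ (fun p => ((Φ p₀).1 / p₀.1 * p.1, (Φ p₀).2 / p₀.2 * p.2)) V := fun p hp =>
    Prod.ext ((div_eq_iff hp.2.1).1 (h₁ hp)) ((div_eq_iff hp.2.2).1 (h₂ hp))
  exact hV.of_subset_closure hdiff.continuousOn (by fun_prop) inter_subset_left
    (((dense_compl_singleton 0).prod (dense_compl_singleton 0)).open_subset_closure_inter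
      (isOpen_tube hl))

theorem pow_pred_eq_one_of_eq_diag (hr : 0 < r) (hδ : δ ≠ 0) (hd : d ≠ 0)
    (hmaps : MapsTo (monomialMap δ γ d) (tube r l) (tube r l))
    (hconj : ∀ p ∈ tube r l, Φ (monomialMap δ γ d p) = monomialMap δ γ d (Φ p))
    {c₁ c₂ : ℂ} (hc₁ : c₁ ≠ 0) (hc₂ : c₂ ≠ 0) (hΦ : ∀ p ∈ tube r l, Φ p = (c₁ * p.1, c₂ * p.2)) :
    c₁ ^ (δ - 1) = 1 ∧ c₁ ^ γ * c₂ ^ (d - 1) = 1 := by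
  obtain ⟨⟨p, hp, hp₁, hp₂⟩, -⟩ := isConnected_tube_inter (l := l) hr
  have h := hconj p hp
  rw [hΦ _ (hmaps hp), hΦ p hp] at h
  simp only [monomialMap, Prod.mk.injEq] at h
  constructor
  · simpa using mul_pow_pred_eq_one (b := 1) hδ hc₁ (pow_ne_zero δ hp₁) (by rw [h.1]; ring)
  · exact mul_pow_pred_eq_one hd hc₂ (mul_ne_zero (pow_ne_zero γ hp₁) (pow_ne_zero d hp₂))
      (by rw [h.2]; ring)

end Conjugacy

theorem stmt15_general
    (δ d γ : ℕ) (hδ : 2 ≤ δ) (hd : 2 ≤ d)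
    (l r : ℝ) (hl : 0 ≤ l) (hr : 0 < r)
    (U : Set (ℂ × ℂ)) (hU : U = {p : ℂ × ℂ | ‖p.1‖ < r ∧ ‖p.2‖ < r * ‖p.1‖ ^ l})
    (φ1 : ℂ → ℂ) (φ2 : ℂ → ℂ → ℂ)
    (hdiff : DifferentiableOn ℂ (fun p : ℂ × ℂ => (φ1 p.1, φ2 p.1 p.2)) U)
    (hmapsto : Set.MapsTo (fun p : ℂ × ℂ => (p.1 ^ δ, p.1 ^ γ * p.2 ^ d)) U U)
    (hconj : ∀ p ∈ U, φ1 (p.1 ^ δ) = (φ1 p.1) ^ δ ∧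
      φ2 (p.1 ^ δ) (p.1 ^ γ * p.2 ^ d) = (φ1 p.1) ^ γ * (φ2 p.1 p.2) ^ d)
    (hasymp : ∀ ε > 0, ∃ ρ, 0 < ρ ∧ ρ ≤ r ∧ ∀ p : ℂ × ℂ,
      ‖p.1‖ < ρ → ‖p.2‖ < ρ * ‖p.1‖ ^ l →
      ((1 - ε) * ‖p.1‖ ≤ ‖φ1 p.1‖ ∧ ‖φ1 p.1‖ ≤ (1 + ε) * ‖p.1‖ ∧
       (1 - ε) * ‖p.2‖ ≤ ‖φ2 p.1 p.2‖ ∧ ‖φ2 p.1 p.2‖ ≤ (1 + ε) * ‖p.2‖)) :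
    ∃ c1 c2 : ℂ, c1 ^ (δ - 1) = 1 ∧ c1 ^ γ * c2 ^ (d - 1) = 1 ∧
      ∀ p ∈ U, φ1 p.1 = c1 * p.1 ∧ φ2 p.1 p.2 = c2 * p.2 := by
  subst hU
  set Φ : ℂ × ℂ → ℂ × ℂ := fun p => (φ1 p.1, φ2 p.1 p.2)
  have hconj' : ∀ p ∈ tube r l, Φ (monomialMap δ γ d p) = monomialMap δ γ d (Φ p) :=
    fun p hp => Prod.ext (hconj p hp).1 (hconj p hp).2
  obtain ⟨c₁, c₂, hc₁, hc₂, hΦ⟩ := exists_norm_eq_one_and_eq_diag hl hr hδ hd hdiff hmapsto hconj'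
    fun ε hε => (hasymp ε hε).imp fun _ ⟨hρ, _, h⟩ => ⟨hρ, fun p hp => h p hp.1 hp.2⟩
  obtain ⟨hrel₁, hrel₂⟩ := pow_pred_eq_one_of_eq_diag hr (by omega) (by omega) hmapsto hconj'
    (norm_ne_zero_iff.1 (hc₁.trans_ne one_ne_zero))
    (norm_ne_zero_iff.1 (hc₂.trans_ne one_ne_zero)) hΦ
  exact ⟨c₁, c₂, hrel₁, hrel₂, fun p hp => Prod.ext_iff.1 (hΦ p hp)⟩

/-- let f₀(z,w) = (z^δ, z^γ w^d) with δ ≥ 2, d ≥ 2, γ ≥ 0, γ + d ≥ 2,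
and let φ(z,w) = (φ₁(z), φ₂(z,w)) be a biholomorphic skew product on
U = {|z| < r, |w| < r|z|^l} (l ≥ 0) conjugating f₀ to itself and satisfying
|φ₁(z)| ~ |z| and |φ₂(z,w)| ~ |w| as r → 0. Then φ(z,w) = (c₁z, c₂w) on U with
c₁^{δ-1} = 1 and c₁^γ c₂^{d-1} = 1. -/
theorem stmt15
    (δ d γ : ℕ) (hδ : 2 ≤ δ) (hd : 2 ≤ d) (hγd : 2 ≤ γ + d)
    (l r : ℝ) (hl : 0 ≤ l) (hr : 0 < r)
    (U : Set (ℂ × ℂ)) (hU : U = {p : ℂ × ℂ | ‖p.1‖ < r ∧ ‖p.2‖ < r * ‖p.1‖ ^ l})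
    (φ1 : ℂ → ℂ) (φ2 : ℂ → ℂ → ℂ)
    (hdiff : DifferentiableOn ℂ (fun p : ℂ × ℂ => (φ1 p.1, φ2 p.1 p.2)) U)
    (hinj : Set.InjOn (fun p : ℂ × ℂ => (φ1 p.1, φ2 p.1 p.2)) U)
    (hmapsto : Set.MapsTo (fun p : ℂ × ℂ => (p.1 ^ δ, p.1 ^ γ * p.2 ^ d)) U U)
    (hconj : ∀ p ∈ U, φ1 (p.1 ^ δ) = (φ1 p.1) ^ δ ∧
      φ2 (p.1 ^ δ) (p.1 ^ γ * p.2 ^ d) = (φ1 p.1) ^ γ * (φ2 p.1 p.2) ^ d)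
    (hasymp : ∀ ε > 0, ∃ ρ, 0 < ρ ∧ ρ ≤ r ∧ ∀ p : ℂ × ℂ,
      ‖p.1‖ < ρ → ‖p.2‖ < ρ * ‖p.1‖ ^ l →
      ((1 - ε) * ‖p.1‖ ≤ ‖φ1 p.1‖ ∧ ‖φ1 p.1‖ ≤ (1 + ε) * ‖p.1‖ ∧
       (1 - ε) * ‖p.2‖ ≤ ‖φ2 p.1 p.2‖ ∧ ‖φ2 p.1 p.2‖ ≤ (1 + ε) * ‖p.2‖)) :
    ∃ c1 c2 : ℂ, c1 ^ (δ - 1) = 1 ∧ c1 ^ γ * c2 ^ (d - 1) = 1 ∧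
      ∀ p ∈ U, φ1 p.1 = c1 * p.1 ∧ φ2 p.1 p.2 = c2 * p.2 :=
  stmt15_general δ d γ hδ hd l r hl hr U hU φ1 φ2 hdiff hmapsto hconj hasymp
end

section
/- Let f_0(z,w) = (z^δ, z^γ w^d) with δ > d ≥ 1 and γ > 0, and let U = {|z| < r, |w| < r} for some 0 < r < 1 (Case 1). Then the union A = ⋃_{n≥0} f_0^{-n}(U) of all preimages of U under f_0 equals {(z,w) : |z| < 1}. -/
/-!
The iterates are `f₀ⁿ(z, w) = (z^(δⁿ), z^(γₙ) w^(dⁿ))` with `γₙ ≥ δⁿ⁻¹`. If `|z| ≥ 1` the first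
coordinate never enters the disc of radius `r < 1`. If `|z| < 1`, the second coordinate is at most
`|z|^(δⁿ⁻¹) |w|^(dⁿ) = (|z|^(δⁿ⁻¹ / dⁿ) |w|)^(dⁿ)`, and `δⁿ⁻¹ / dⁿ → ∞` because `d < δ`; so both
coordinates eventually fall below `r`.
-/

open Filter

def skewPowerMap {M : Type*} [CommMonoid M] (δ d γ : ℕ) (p : M × M) : M × M :=
  (p.1 ^ δ, p.1 ^ γ * p.2 ^ d)

/-- The exponent `γₙ = ∑_{j=1}^n δ^(n-j) d^(j-1) γ` of `z` in the second coordinate of the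
`n`-th iterate of `skewPowerMap δ d γ`. -/
def skewExponent (δ d γ : ℕ) : ℕ → ℕ
  | 0 => 0
  | n + 1 => γ * δ ^ n + d * skewExponent δ d γ n

theorem pow_le_skewExponent_succ {δ γ : ℕ} (d : ℕ) (hγ : 0 < γ) (n : ℕ) :
    δ ^ n ≤ skewExponent δ d γ (n + 1) :=
  (Nat.le_mul_of_pos_left _ hγ).trans (Nat.le_add_right _ _)

theorem iterate_skewPowerMap {M : Type*} [CommMonoid M] (δ d γ n : ℕ) (p : M × M) :
    (skewPowerMap δ d γ)^[n] p = (p.1 ^ δ ^ n, p.1 ^ skewExponent δ d γ n * p.2 ^ d ^ n) := by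
  induction n with
  | zero => simp [skewExponent]
  | succ n ih =>
    rw [Function.iterate_succ_apply', ih, skewPowerMap, skewExponent, Prod.mk.injEq, pow_succ,
      pow_mul, mul_pow, ← pow_mul, ← pow_mul, ← pow_mul, pow_add, pow_succ, mul_assoc]
    exact ⟨rfl, by rw [mul_comm γ, ← pow_mul, mul_comm d]⟩

theorem eventually_mul_pow_le_pow {d δ : ℕ} (hd : 0 < d) (hdδ : d < δ) (C : ℕ) :
    ∀ᶠ n in atTop, C * d ^ n ≤ δ ^ n := by
  have hratio : (1 : ℝ) < δ / d := by
    rw [lt_div_iff₀ (by exact_mod_cast hd)]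
    exact_mod_cast (one_mul d).trans_lt hdδ
  filter_upwards [(tendsto_pow_atTop_atTop_of_one_lt hratio).eventually_ge_atTop (C : ℝ)] with n hn
  rw [div_pow, le_div_iff₀ (by positivity)] at hn
  exact_mod_cast hn

theorem eventually_pow_pow_lt {a r : ℝ} (ha0 : 0 ≤ a) (ha1 : a < 1) (hr : 0 < r) {δ : ℕ}
    (hδ : 1 < δ) : ∀ᶠ n in atTop, a ^ δ ^ n < r :=
  ((tendsto_pow_atTop_nhds_zero_of_lt_one ha0 ha1).comp
    (tendsto_pow_atTop_atTop_of_one_lt hδ)).eventually (gt_mem_nhds hr)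

theorem eventually_pow_pow_mul_pow_pow_lt {a b r : ℝ} (ha0 : 0 ≤ a) (ha1 : a < 1) (hb : 0 ≤ b)
    (hr0 : 0 < r) (hr1 : r ≤ 1) {d δ : ℕ} (hd : 0 < d) (hdδ : d < δ) :
    ∀ᶠ n in atTop, a ^ δ ^ n * b ^ d ^ (n + 1) < r := by
  set M := max b 1
  have hM : 0 < M := zero_lt_one.trans_le (le_max_right _ _)
  obtain ⟨K, hK⟩ := exists_pow_lt_of_lt_one (div_pos hr0 hM) ha1
  rw [lt_div_iff₀ hM] at hK
  filter_upwards [eventually_mul_pow_le_pow hd hdδ (K * d)] with n hn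
  rw [mul_assoc, ← pow_succ'] at hn
  calc a ^ δ ^ n * b ^ d ^ (n + 1) ≤ a ^ (K * d ^ (n + 1)) * M ^ d ^ (n + 1) :=
        mul_le_mul (pow_le_pow_of_le_one ha0 ha1.le hn) (pow_le_pow_left₀ hb (le_max_left _ _) _)
          (by positivity) (by positivity)
    _ = (a ^ K * M) ^ d ^ (n + 1) := by rw [pow_mul, mul_pow]
    _ ≤ a ^ K * M := pow_le_of_le_one (by positivity) (hK.le.trans hr1) (pow_ne_zero _ hd.ne')
    _ < r := hK

/-- for f₀(z,w) = (z^δ, z^γ w^d) with δ > d ≥ 1 and γ > 0, and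
U = {|z| < r, |w| < r} with 0 < r < 1, the union A = ⋃_{n ≥ 0} f₀⁻ⁿ(U) of all preimages
of U under f₀ equals {(z,w) : |z| < 1}. -/
theorem stmt17
    (δ d γ : ℕ) (hδd : d < δ) (hd : 1 ≤ d) (hγ : 0 < γ)
    (r : ℝ) (hr0 : 0 < r) (hr1 : r < 1)
    (f0 : ℂ × ℂ → ℂ × ℂ) (hf0 : ∀ p, f0 p = (p.1 ^ δ, p.1 ^ γ * p.2 ^ d))
    (U A : Set (ℂ × ℂ))
    (hU : U = {p : ℂ × ℂ | ‖p.1‖ < r ∧ ‖p.2‖ < r})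
    (hA : A = ⋃ n : ℕ, f0^[n] ⁻¹' U) :
    A = {p : ℂ × ℂ | ‖p.1‖ < 1} := by
  obtain rfl : f0 = skewPowerMap δ d γ := funext hf0
  subst hU hA
  ext p
  simp only [Set.mem_iUnion, Set.mem_preimage, iterate_skewPowerMap, Set.mem_ofPred_eq, norm_mul,
    norm_pow]
  constructor
  · rintro ⟨n, hz, -⟩
    by_contra! h
    exact (one_le_pow₀ h).not_gt (hz.trans hr1)
  · intro hz
    obtain ⟨n, hfst, hsnd⟩ := ((tendsto_add_atTop_nat 1).eventually
      (eventually_pow_pow_lt (norm_nonneg _) hz hr0 (hd.trans_lt hδd))).and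
      (eventually_pow_pow_mul_pow_pow_lt (norm_nonneg _) hz (norm_nonneg p.2) hr0 hr1.le hd
        hδd) |>.exists
    refine ⟨n + 1, hfst, lt_of_le_of_lt ?_ hsnd⟩
    gcongr ?_ * _
    exact pow_le_pow_of_le_one (norm_nonneg _) hz.le (pow_le_skewExponent_succ d hγ n)
end

section
/- Let f(z,w) = (p(z), q(z,w)) with p(z) = z^δ(1+ζ(z)) and q(z,w) = b z^γ w (1+η(z,w)), b ≠ 0 (i.e., d = 1), in Case 4 with T_k < δ < T_{k-1}, so that γ̃ = γ + l_1·1 - l_1·δ > 0 and δ > d̃ = l_2^{-1}γ̃ + 1 > 1. Suppose |ζ|, |η| are small on U_r. Then f^n(U_r) ⊆ U_{r/2^n} for all n ≥ 0 and all sufficiently small r, where U_ρ = {ρ^{-l_2}|z|^{l_1+l_2} < |w| < ρ|z|^{l_1}}. -/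
/-- The wedge U_ρ = { ρ^{-l₂}|z|^{l₁+l₂} < |w| < ρ|z|^{l₁} }. -/
def inWedge (l1 l2 ρ : ℝ) (p : ℂ × ℂ) : Prop :=
  ρ ^ (-l2) * ‖p.1‖ ^ (l1 + l2) < ‖p.2‖ ∧ ‖p.2‖ < ρ * ‖p.1‖ ^ l1

/-! On `U_r` one has `|z|^{l₂} < r^{1+l₂}`, so `|z| < r` once `r ≤ 1`. With `x = |z|` and
`|1 + ζ|, |1 + η| ∈ [1/2, 3/2]`, the image of a point of `U_r` lies below the upper edge of
`U_{r/2}` as soon as `(3/2)|b| x^{γ̃} ≤ 2^{-(l₁+1)}`, and above its lower edge as soon as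
`2^{l₂}(3/2)^{l₁+l₂} x^{l₂(δ - d̃)} ≤ |b|/2`. Both exponents `γ̃ = γ + l₁ - δl₁` and
`l₂(δ - d̃) = δ(l₁+l₂) - (γ+l₁+l₂)` are positive, so both conditions hold for small `r`: `f` maps
`U_r` into `U_{r/2}`, and iterating halves `r` at every step. -/

open Set Real

namespace inWedge

variable {l1 l2 r : ℝ} {p : ℂ × ℂ}

theorem mono {r' : ℝ} (hl2 : 0 ≤ l2) (hr : 0 < r) (hrr' : r ≤ r') (hp : inWedge l1 l2 r p) :
    inWedge l1 l2 r' p := by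
  refine ⟨lt_of_le_of_lt ?_ hp.1, hp.2.trans_le ?_⟩
  · exact mul_le_mul_of_nonneg_right (rpow_le_rpow_of_nonpos hr hrr' (neg_nonpos.mpr hl2))
      (by positivity)
  · gcongr

theorem norm_fst_pos (hl1 : l1 ≠ 0) (hp : inWedge l1 l2 r p) : 0 < ‖p.1‖ := by
  refine (norm_nonneg _).lt_of_ne fun h => ?_
  have := hp.2
  rw [← h, zero_rpow hl1] at this
  linarith [norm_nonneg p.2]

theorem norm_fst_lt (hl1 : l1 ≠ 0) (hl2 : 0 < l2) (hr : 0 < r) (hr1 : r ≤ 1)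
    (hp : inWedge l1 l2 r p) : ‖p.1‖ < r := by
  have hx := hp.norm_fst_pos hl1
  have hedge : r ^ (-l2) * (‖p.1‖ ^ l1 * ‖p.1‖ ^ l2) < r * ‖p.1‖ ^ l1 := by
    rw [← rpow_add hx]; exact hp.1.trans hp.2
  have hxl2 : (r ^ l2)⁻¹ * ‖p.1‖ ^ l2 < r := by
    refine lt_of_mul_lt_mul_left (a := ‖p.1‖ ^ l1) ?_ (rpow_nonneg hx.le _)
    rw [rpow_neg hr.le] at hedge
    linarith
  rw [inv_mul_lt_iff₀ (rpow_pos_of_pos hr _)] at hxl2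
  refine (rpow_lt_rpow_iff hx.le hr.le hl2).mp (hxl2.trans_le ?_)
  exact mul_le_of_le_one_right (rpow_nonneg hr.le _) hr1

end inWedge

section WedgeEdges

variable {δ γ l1 l2 r B x y u v : ℝ}

theorem lt_half_upper_edge (hr : 0 < r) (hB : 0 < B) (hx : 0 < x) (hy : 0 ≤ y)
    (hu : 1 / 2 ≤ u) (hv : v ≤ 3 / 2) (hl1 : 0 ≤ l1) (hxy : y < r * x ^ l1)
    (hsmall : 3 / 2 * B * x ^ (γ + l1 - δ * l1) ≤ (1 / 2) ^ (l1 + 1)) :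
    B * x ^ γ * y * v < r / 2 * (x ^ δ * u) ^ l1 := by
  have hsplit : x ^ γ * x ^ l1 = x ^ (γ + l1 - δ * l1) * x ^ (δ * l1) := by
    rw [← rpow_add hx, ← rpow_add hx]; ring_nf
  calc B * x ^ γ * y * v ≤ B * x ^ γ * y * (3 / 2) := by gcongr
    _ < B * x ^ γ * (r * x ^ l1) * (3 / 2) := by gcongr
    _ = r * (3 / 2 * B * x ^ (γ + l1 - δ * l1)) * x ^ (δ * l1) := by
        linear_combination (3 / 2 * B * r) * hsplit
    _ ≤ r * (1 / 2) ^ (l1 + 1) * x ^ (δ * l1) := by gcongr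
    _ = r / 2 * (x ^ δ * (1 / 2)) ^ l1 := by
        rw [rpow_add_one (by norm_num), mul_rpow (by positivity) (by norm_num), ← rpow_mul hx.le]
        ring
    _ ≤ r / 2 * (x ^ δ * u) ^ l1 := by gcongr

theorem half_lower_edge_lt (hr : 0 < r) (hB : 0 < B) (hx : 0 < x) (hy : 0 ≤ y)
    (hu0 : 0 ≤ u) (hu : u ≤ 3 / 2) (hv : 1 / 2 ≤ v) (hl : 0 ≤ l1 + l2)
    (hxy : r ^ (-l2) * x ^ (l1 + l2) < y)
    (hsmall : 2 ^ l2 * (3 / 2) ^ (l1 + l2) * x ^ (δ * (l1 + l2) - (γ + l1 + l2)) ≤ B / 2) :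
    (r / 2) ^ (-l2) * (x ^ δ * u) ^ (l1 + l2) < B * x ^ γ * y * v := by
  have hsplit : x ^ (δ * (l1 + l2))
      = x ^ (δ * (l1 + l2) - (γ + l1 + l2)) * x ^ (l1 + l2) * x ^ γ := by
    rw [← rpow_add hx, ← rpow_add hx]; ring_nf
  have hhalf : (r / 2) ^ (-l2) = 2 ^ l2 * r ^ (-l2) := by
    rw [div_rpow hr.le zero_le_two, rpow_neg zero_le_two, div_inv_eq_mul, mul_comm]
  calc (r / 2) ^ (-l2) * (x ^ δ * u) ^ (l1 + l2)
      = 2 ^ l2 * u ^ (l1 + l2) * x ^ (δ * (l1 + l2) - (γ + l1 + l2))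
          * (r ^ (-l2) * x ^ (l1 + l2)) * x ^ γ := by
        rw [hhalf, mul_rpow (by positivity) hu0, ← rpow_mul hx.le, hsplit]
        ring
    _ ≤ 2 ^ l2 * (3 / 2) ^ (l1 + l2) * x ^ (δ * (l1 + l2) - (γ + l1 + l2))
          * (r ^ (-l2) * x ^ (l1 + l2)) * x ^ γ := by gcongr
    _ ≤ B / 2 * (r ^ (-l2) * x ^ (l1 + l2)) * x ^ γ := by gcongr
    _ < B / 2 * y * x ^ γ := by gcongr
    _ = B * x ^ γ * y * (1 / 2) := by ring
    _ ≤ B * x ^ γ * y * v := by gcongr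

end WedgeEdges

theorem inWedge_half_of_inWedge {δ γ : ℕ} {b ζ η z w : ℂ} {l1 l2 r : ℝ} (hb : b ≠ 0)
    (hl1 : 0 < l1) (hl2 : 0 < l2) (hr : 0 < r) (hζ : ‖ζ‖ ≤ 1 / 2) (hη : ‖η‖ ≤ 1 / 2)
    (hsmall1 : 3 / 2 * ‖b‖ * ‖z‖ ^ ((γ : ℝ) + l1 - δ * l1) ≤ (1 / 2) ^ (l1 + 1))
    (hsmall2 : 2 ^ l2 * (3 / 2) ^ (l1 + l2) * ‖z‖ ^ ((δ : ℝ) * (l1 + l2) - (γ + l1 + l2))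
      ≤ ‖b‖ / 2)
    (hp : inWedge l1 l2 r (z, w)) :
    inWedge l1 l2 (r / 2) (z ^ δ * (1 + ζ), b * z ^ γ * w * (1 + η)) := by
  have hz := hp.norm_fst_pos hl1.ne'
  have hb' := norm_pos_iff.mpr hb
  have hζ₁ := norm_sub_le_norm_add (1 : ℂ) ζ
  have hζ₂ := norm_add_le (1 : ℂ) ζ
  have hη₁ := norm_sub_le_norm_add (1 : ℂ) η
  have hη₂ := norm_add_le (1 : ℂ) η
  rw [norm_one] at hζ₁ hζ₂ hη₁ hη₂
  simp only [inWedge, norm_mul, norm_pow, ← rpow_natCast] at hp ⊢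
  exact ⟨half_lower_edge_lt hr hb' hz (norm_nonneg w) (norm_nonneg _) (by linarith)
      (by linarith) (by positivity) hp.1 hsmall2,
    lt_half_upper_edge hr hb' hz (norm_nonneg w) (by linarith) (by linarith) hl1.le hp.2 hsmall1⟩

theorem exists_pos_forall_rpow_le {a c : ℝ} (ha : 0 < a) (hc : 0 < c) :
    ∃ ρ > 0, ∀ x, 0 ≤ x → x ≤ ρ → x ^ a ≤ c :=
  ⟨c ^ a⁻¹, rpow_pos_of_pos hc _, fun _ hx hxρ => (le_rpow_inv_iff_of_pos hx hc.le ha).mp hxρ⟩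

theorem mapsTo_iterate_of_mapsTo_half {α : Type*} {S : ℝ → Set α} {f : α → α} {r0 : ℝ}
    (hf : ∀ r, 0 < r → r ≤ r0 → MapsTo f (S r) (S (r / 2))) {r : ℝ} (hr : 0 < r)
    (hr0 : r ≤ r0) (n : ℕ) : MapsTo f^[n] (S r) (S (r / 2 ^ n)) := by
  induction n with
  | zero => simpa using mapsTo_id (S r)
  | succ n ih =>
    have hrn : r / 2 ^ n ≤ r0 := (div_le_self hr.le (one_le_pow₀ one_le_two)).trans hr0
    rw [Function.iterate_succ', pow_succ, ← div_div]
    exact (hf _ (by positivity) hrn).comp ih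

theorem stmt19_general
    (δ γ : ℕ) (b : ℂ) (hb : b ≠ 0)
    (l1 l2 : ℝ) (hl1 : 0 < l1) (hl2 : 0 < l2)
    (γt : ℝ) (hγt : γt = (γ : ℝ) + l1 * 1 - l1 * δ)
    (h1 : 1 < (δ : ℝ) - l2⁻¹ * γt)
    (h3 : 0 < γt) :
    ∃ ε0 > 0, ∀ (ζ : ℂ → ℂ) (η : ℂ × ℂ → ℂ) (r1 : ℝ), 0 < r1 →
      (∀ p : ℂ × ℂ, inWedge l1 l2 r1 p → ‖ζ p.1‖ ≤ ε0 ∧ ‖η p‖ ≤ ε0) →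
      ∀ f : ℂ × ℂ → ℂ × ℂ,
        (∀ p, f p = (p.1 ^ δ * (1 + ζ p.1), b * p.1 ^ γ * p.2 * (1 + η p))) →
        ∃ r0, 0 < r0 ∧ r0 ≤ r1 ∧ ∀ r, 0 < r → r ≤ r0 → ∀ n : ℕ, ∀ p : ℂ × ℂ,
          inWedge l1 l2 r p → inWedge l1 l2 (r / 2 ^ n) (f^[n] p) := by
  have hB := norm_pos_iff.mpr hb
  have hupper : 0 < (γ : ℝ) + l1 - δ * l1 := by linarith
  have hlower : 0 < (δ : ℝ) * (l1 + l2) - (γ + l1 + l2) := by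
    have := mul_lt_mul_of_pos_left h1 hl2
    rw [mul_sub, mul_inv_cancel_left₀ hl2.ne', hγt] at this
    linarith
  obtain ⟨ρ1, hρ1, hsmall1⟩ := exists_pos_forall_rpow_le hupper
    (c := (1 / 2) ^ (l1 + 1) / (3 / 2 * ‖b‖)) (by positivity)
  obtain ⟨ρ2, hρ2, hsmall2⟩ := exists_pos_forall_rpow_le hlower
    (c := ‖b‖ / 2 / (2 ^ l2 * (3 / 2) ^ (l1 + l2))) (by positivity)
  refine ⟨1 / 2, by norm_num, fun ζ η r1 hr1 hsmall f hf => ⟨min (min r1 1) (min ρ1 ρ2),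
    by positivity, (min_le_left _ _).trans (min_le_left _ _), fun r hr hr0 n => ?_⟩⟩
  refine mapsTo_iterate_of_mapsTo_half (S := fun r => {p | inWedge l1 l2 r p})
    (fun r hr hr0 ⟨z, w⟩ hp => ?_) hr hr0 n
  obtain ⟨⟨hrr1, hr1⟩, hrρ1, hrρ2⟩ : (r ≤ r1 ∧ r ≤ 1) ∧ r ≤ ρ1 ∧ r ≤ ρ2 := by
    simpa only [le_min_iff] using hr0
  have hz := (hp.norm_fst_lt hl1.ne' hl2 hr hr1).le
  obtain ⟨hζ, hη⟩ := hsmall _ (hp.mono hl2.le hr hrr1)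
  rw [hf]
  exact inWedge_half_of_inWedge hb hl1 hl2 hr hζ hη
    ((le_div_iff₀' (by positivity)).mp (hsmall1 _ (norm_nonneg z) (hz.trans hrρ1)))
    ((le_div_iff₀' (by positivity)).mp (hsmall2 _ (norm_nonneg z) (hz.trans hrρ2))) hp

/-- let f(z,w) = (z^δ(1 + ζ(z)), b z^γ w (1 + η(z,w))) with b ≠ 0
(the case d = 1), in Case 4 with T_k < δ < T_{k-1}, so that γ̃ = γ + l₁·1 - l₁δ > 0 and
δ > d̃ = l₂⁻¹γ̃ + 1 > 1 (equivalently δ - l₂⁻¹γ̃ > 1 and l₂⁻¹(δ - d̃) > 0). If |ζ| and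
|η| are sufficiently small on the wedge, then fⁿ(U_r) ⊆ U_{r/2ⁿ} for all n ≥ 0 and all
sufficiently small r > 0. -/
theorem stmt19
    (δ γ : ℕ) (hδ : 2 ≤ δ) (hγ : 1 ≤ γ) (b : ℂ) (hb : b ≠ 0)
    (l1 l2 : ℝ) (hl1 : 0 < l1) (hl2 : 0 < l2)
    (γt dt : ℝ) (hγt : γt = (γ : ℝ) + l1 * 1 - l1 * δ) (hdt : dt = l2⁻¹ * γt + 1)
    (h1 : 1 < (δ : ℝ) - l2⁻¹ * γt) (h2 : 0 < l2⁻¹ * ((δ : ℝ) - dt))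
    (h3 : 0 < γt) (h4 : 1 < dt) :
    ∃ ε0 > 0, ∀ (ζ : ℂ → ℂ) (η : ℂ × ℂ → ℂ) (r1 : ℝ), 0 < r1 →
      (∀ p : ℂ × ℂ, inWedge l1 l2 r1 p → ‖ζ p.1‖ ≤ ε0 ∧ ‖η p‖ ≤ ε0) →
      ∀ f : ℂ × ℂ → ℂ × ℂ,
        (∀ p, f p = (p.1 ^ δ * (1 + ζ p.1), b * p.1 ^ γ * p.2 * (1 + η p))) →
        ∃ r0, 0 < r0 ∧ r0 ≤ r1 ∧ ∀ r, 0 < r → r ≤ r0 → ∀ n : ℕ, ∀ p : ℂ × ℂ,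
          inWedge l1 l2 r p → inWedge l1 l2 (r / 2 ^ n) (f^[n] p) :=
  stmt19_general δ γ b hb l1 l2 hl1 hl2 γt hγt h1 h3
end
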